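/- arXiv:2411.11428 — 12 statements merged into one kernel-verified Lean document; each statement's English description precedes it below -/
import Mathlib

section
/- Given a reflexive Kripke frame (W,R) and a ±-path π : [0;ℓ] → W, there exists an up-down path π' : [0;ℓ'] → W for some ℓ', together with a total, surjective, monotone non-decreasing function f : [0;ℓ'] → [0;ℓ] such that π'(j) = π(f(j)) for all j ∈ [0;ℓ']. -/
/-- Undirected-path condition for `π` on `[0;ℓ]` w.r.t. the relation `R`:
consecutive elements are related in one direction or the other. -/
def UPath {W : Type*} (R : W → W → Prop) (π : ℕ → W) (ℓ : ℕ) : Prop :=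
  ∀ i < ℓ, R (π i) (π (i + 1)) ∨ R (π (i + 1)) (π i)

/-- Lemma (±-path to up-down path): in a reflexive Kripke frame, every ±-path can be
transformed into an up-down path visiting the same elements, via a total surjective
monotone non-decreasing reindexing function. -/
theorem pm_to_updown {W : Type*} (R : W → W → Prop) (hrefl : ∀ w, R w w)
    (ℓ : ℕ) (π : ℕ → W)
    (hU : UPath R π ℓ) (hℓ : 2 ≤ ℓ)
    (hfirst : R (π 0) (π 1)) (hlast : R (π ℓ) (π (ℓ - 1))) :
    ∃ (k : ℕ) (π' : ℕ → W) (f : ℕ → ℕ),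
      1 ≤ k ∧
      UPath R π' (2 * k) ∧
      (∀ i < k, R (π' (2 * i)) (π' (2 * i + 1)) ∧ R (π' (2 * i + 2)) (π' (2 * i + 1))) ∧
      (∀ j ≤ 2 * k, f j ≤ ℓ) ∧
      (∀ i ≤ ℓ, ∃ j ≤ 2 * k, f j = i) ∧
      (∀ j j', j ≤ j' → j' ≤ 2 * k → f j ≤ f j') ∧
      (∀ j ≤ 2 * k, π' j = π (f j)) := by
  classical
  set f : ℕ → ℕ := fun j =>
    if j % 2 = 0 then j / 2
    else if R (π (j / 2)) (π (j / 2 + 1)) then j / 2 + 1 else j / 2 with hf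
  have feven : ∀ i, f (2 * i) = i := by
    intro i
    simp [hf, Nat.mul_mod_right, Nat.mul_div_cancel_left]
  have fodd : ∀ i, f (2 * i + 1) =
      if R (π i) (π (i + 1)) then i + 1 else i := by
    intro i
    have h1 : (2 * i + 1) % 2 = 1 := by omega
    have h2 : (2 * i + 1) / 2 = i := by omega
    simp [hf, h1, h2]
  have key : ∀ i < ℓ, R (π (f (2 * i))) (π (f (2 * i + 1))) ∧
      R (π (f (2 * i + 2))) (π (f (2 * i + 1))) := by
    intro i hi
    have h2 : 2 * i + 2 = 2 * (i + 1) := by ring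
    rw [feven, h2, feven, fodd]
    by_cases h : R (π i) (π (i + 1))
    · simp [h, hrefl]
    · simp [h, hrefl]
      rcases hU i hi with h' | h'
      · exact absurd h' h
      · exact h'
  have fmono : Monotone f := by
    apply monotone_nat_of_le_succ
    intro j
    rcases Nat.even_or_odd j with ⟨i, hij⟩ | ⟨i, hij⟩
    · subst hij
      rw [show i + i = 2 * i by ring, feven, fodd]
      split <;> omega
    · subst hij
      rw [show 2 * i + 1 + 1 = 2 * (i + 1) by ring, feven, fodd]
      split <;> omega
  have fbound : ∀ j ≤ 2 * ℓ, f j ≤ ℓ := by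
    intro j hj
    calc f j ≤ f (2 * ℓ) := fmono hj
    _ = ℓ := feven ℓ
  refine ⟨ℓ, fun j => π (f j), f, by omega, ?_, ?_, fbound, ?_, ?_, fun j _ => rfl⟩
  · intro j hj
    rcases Nat.even_or_odd j with ⟨i, hij⟩ | ⟨i, hij⟩
    · left
      have := (key i (by omega)).1
      show R (π (f j)) (π (f (j + 1)))
      rwa [show j = 2 * i by omega]
    · right
      have := (key i (by omega)).2
      show R (π (f (j + 1))) (π (f j))
      rwa [show j + 1 = 2 * i + 2 by omega, show j = 2 * i + 1 by omega]
  · exact key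
  · intro i hi
    exact ⟨2 * i, by omega, feven i⟩
  · intro j j' hjj' _
    exact fmono hjj'
end

section
/- Given a reflexive Kripke frame (W,R) and a down-path π : [0;ℓ] → W, there exists an up-down path π' : [0;ℓ'] → W for some ℓ', together with a total, surjective, monotone non-decreasing function f : [0;ℓ'] → [0;ℓ] such that π'(j) = π(f(j)) for all j ∈ [0;ℓ']. -/
/-- Lemma (down-path to up-down path): in a reflexive Kripke frame, every down-path can be
transformed into an up-down path visiting the same elements, via a total surjective
monotone non-decreasing reindexing function. -/
theorem down_to_updown {W : Type*} (R : W → W → Prop) (hrefl : ∀ w, R w w)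
    (ℓ : ℕ) (π : ℕ → W)
    (hU : UPath R π ℓ) (hℓ : 1 ≤ ℓ)
    (hlast : R (π ℓ) (π (ℓ - 1))) :
    ∃ (k : ℕ) (π' : ℕ → W) (f : ℕ → ℕ),
      1 ≤ k ∧
      UPath R π' (2 * k) ∧
      (∀ i < k, R (π' (2 * i)) (π' (2 * i + 1)) ∧ R (π' (2 * i + 2)) (π' (2 * i + 1))) ∧
      (∀ j ≤ 2 * k, f j ≤ ℓ) ∧
      (∀ i ≤ ℓ, ∃ j ≤ 2 * k, f j = i) ∧
      (∀ j j', j ≤ j' → j' ≤ 2 * k → f j ≤ f j') ∧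
      (∀ j ≤ 2 * k, π' j = π (f j)) := by
  classical
  let f : ℕ → ℕ := fun j =>
    if j % 2 = 0 then j / 2
    else if R (π (j / 2)) (π (j / 2 + 1)) then j / 2 + 1 else j / 2
  have feven : ∀ i, f (2 * i) = i := by
    intro i
    show (if (2 * i) % 2 = 0 then (2 * i) / 2 else _) = i
    rw [if_pos (by omega)]; omega
  have fodd : ∀ i, f (2 * i + 1) = if R (π i) (π (i + 1)) then i + 1 else i := by
    intro i
    show (if (2 * i + 1) % 2 = 0 then _
      else if R (π ((2 * i + 1) / 2)) (π ((2 * i + 1) / 2 + 1)) then (2 * i + 1) / 2 + 1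
      else (2 * i + 1) / 2) = _
    rw [if_neg (by omega)]
    have h2 : (2 * i + 1) / 2 = i := by omega
    rw [h2]
  have fbound : ∀ j, j / 2 ≤ f j ∧ f j ≤ (j + 1) / 2 := by
    intro j
    rcases Nat.even_or_odd j with ⟨i, hi⟩ | ⟨i, hi⟩
    · have : j = 2 * i := by omega
      subst this
      rw [feven]; omega
    · subst hi
      rw [fodd]
      split <;> omega
  have shape : ∀ i < ℓ, R (π (f (2 * i))) (π (f (2 * i + 1))) ∧
      R (π (f (2 * i + 2))) (π (f (2 * i + 1))) := by
    intro i hi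
    have h2 : f (2 * i + 2) = i + 1 := by
      have := feven (i + 1); rw [show 2 * (i + 1) = 2 * i + 2 by ring] at this; exact this
    rw [feven, fodd, h2]
    by_cases h : R (π i) (π (i + 1))
    · rw [if_pos h]; exact ⟨h, hrefl _⟩
    · rw [if_neg h]
      refine ⟨hrefl _, ?_⟩
      rcases hU i hi with h' | h'
      · exact absurd h' h
      · exact h'
  refine ⟨ℓ, fun j => π (f j), f, hℓ, ?_, ?_, ?_, ?_, ?_, fun j _ => rfl⟩
  · intro j hj
    rcases Nat.even_or_odd j with ⟨i, hi⟩ | ⟨i, hi⟩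
    · have : j = 2 * i := by omega
      subst this
      exact Or.inl (shape i (by omega)).1
    · subst hi
      have := (shape i (by omega)).2
      rw [show 2 * i + 2 = 2 * i + 1 + 1 by ring] at this
      exact Or.inr this
  · exact shape
  · intro j hj
    have := fbound j
    omega
  · intro i hi
    exact ⟨2 * i, by omega, feven i⟩
  · intro j j' hjj _
    have h1 := fbound j
    have h2 := fbound j'
    rcases eq_or_lt_of_le hjj with rfl | h
    · omega
    · have : (j + 1) / 2 ≤ j' / 2 := Nat.div_le_div_right (by omega)
      omega
end

section
/- Let F = (W,≼,V) be a finite poset model, w ∈ W, and Φ a formula of SLCS_η. Then F,w ⊨ Φ if and only if F,w ⊨ E(Φ), where E is the encoding of SLCS_η into SLCS_γ defined by E(p)=p, E(¬Φ)=¬E(Φ), E(Φ₁∧Φ₂)=E(Φ₁)∧E(Φ₂), and E(η(Φ₁,Φ₂)) = E(Φ₁) ∧ γ(E(Φ₁),E(Φ₂)). -/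
/-- `π` on `[0;ℓ]` is a ±-path w.r.t. `R`. -/
def PMPath {W : Type*} (R : W → W → Prop) (π : ℕ → W) (ℓ : ℕ) : Prop :=
  2 ≤ ℓ ∧ UPath R π ℓ ∧ R (π 0) (π 1) ∧ R (π ℓ) (π (ℓ - 1))

/-- `π` on `[0;ℓ]` is a down-path w.r.t. `R`. -/
def DPath {W : Type*} (R : W → W → Prop) (π : ℕ → W) (ℓ : ℕ) : Prop :=
  1 ≤ ℓ ∧ UPath R π ℓ ∧ R (π ℓ) (π (ℓ - 1))

/-- Formulas of SLCS_η over proposition letters `PL`. -/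
inductive SLCS (PL : Type*) : Type _
  | ap : PL → SLCS PL
  | neg : SLCS PL → SLCS PL
  | conj : SLCS PL → SLCS PL → SLCS PL
  | eta : SLCS PL → SLCS PL → SLCS PL

/-- Satisfaction of SLCS_η formulas on a Kripke model `(W, R, V)`;
`η(Φ₁,Φ₂)` is interpreted via ±-paths. -/
def sat {W PL : Type*} (R : W → W → Prop) (V : PL → W → Prop) : SLCS PL → W → Prop
  | .ap p, w => V p w
  | .neg φ, w => ¬ sat R V φ w
  | .conj φ ψ, w => sat R V φ w ∧ sat R V ψ w
  | .eta φ ψ, w => ∃ (ℓ : ℕ) (π : ℕ → W), PMPath R π ℓ ∧ π 0 = w ∧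
      sat R V ψ (π ℓ) ∧ ∀ i < ℓ, sat R V φ (π i)

/-- Formulas of SLCS_γ over proposition letters `PL`. -/
inductive SLCSg (PL : Type*) : Type _
  | ap : PL → SLCSg PL
  | neg : SLCSg PL → SLCSg PL
  | conj : SLCSg PL → SLCSg PL → SLCSg PL
  | gamma : SLCSg PL → SLCSg PL → SLCSg PL

/-- Satisfaction of SLCS_γ formulas on a Kripke model; `γ(Φ₁,Φ₂)` is interpreted via
±-paths, with `Φ₁` required only at the intermediate points. -/
def satG {W PL : Type*} (R : W → W → Prop) (V : PL → W → Prop) : SLCSg PL → W → Prop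
  | .ap p, w => V p w
  | .neg φ, w => ¬ satG R V φ w
  | .conj φ ψ, w => satG R V φ w ∧ satG R V ψ w
  | .gamma φ ψ, w => ∃ (ℓ : ℕ) (π : ℕ → W), PMPath R π ℓ ∧ π 0 = w ∧
      satG R V ψ (π ℓ) ∧ ∀ i, 0 < i → i < ℓ → satG R V φ (π i)

/-- The encoding `E` of SLCS_η into SLCS_γ. -/
def enc {PL : Type*} : SLCS PL → SLCSg PL
  | .ap p => .ap p
  | .neg φ => .neg (enc φ)
  | .conj φ ψ => .conj (enc φ) (enc ψ)
  | .eta φ ψ => .conj (enc φ) (.gamma (enc φ) (enc ψ))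

/-- Lemma: in a finite poset model, `F,w ⊨ Φ` iff `F,w ⊨ E(Φ)`. -/
theorem sat_iff_satG_enc {W PL : Type*} [PartialOrder W] [Finite W]
    (V : PL → W → Prop) (w : W) (Φ : SLCS PL) :
    sat (· ≤ ·) V Φ w ↔ satG (· ≤ ·) V (enc Φ) w := by
  induction Φ generalizing w with
  | ap p => simp [sat, satG, enc]
  | neg φ ih => simp [sat, satG, enc, ih]
  | conj φ ψ ih1 ih2 => simp [sat, satG, enc, ih1, ih2]
  | eta φ ψ ih1 ih2 =>
    simp only [sat, satG, enc]
    constructor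
    · rintro ⟨ℓ, π, hp, h0, hψ, hφ⟩
      refine ⟨?_, ℓ, π, hp, h0, (ih2 _).1 hψ, fun i _ hi => (ih1 _).1 (hφ i hi)⟩
      rw [← h0]
      exact (ih1 _).1 (hφ 0 (by have := hp.1; omega))
    · rintro ⟨hw, ℓ, π, hp, h0, hψ, hφ⟩
      refine ⟨ℓ, π, hp, h0, (ih2 _).2 hψ, fun i hi => ?_⟩
      rcases Nat.eq_zero_or_pos i with h | h
      · rw [h, h0]; exact (ih1 _).2 hw
      · exact (ih1 _).2 (hφ i h hi)
end

section
/- Let F = (W,≼,V) be a finite poset model and Z ⊆ W×W a weak ±-bisimulation. Then for all w₁,w₂ with Z(w₁,w₂): for each down-path π₁ : [0;k₁] → W from w₁ there is a down-path π₂ : [0;k₂] → W from w₂ such that Z(π₁(k₁),π₂(k₂)) and for each j ∈ [0;k₂) there exists i ∈ [0;k₁) with Z(π₁(i),π₂(j)). -/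
/-- Weak ±-bisimulation on a poset model `(W, ≤, V)`. -/
def IsWPMBisim {W PL : Type*} [PartialOrder W] (V : PL → W → Prop)
    (Z : W → W → Prop) : Prop :=
  Symmetric Z ∧ ∀ w₁ w₂, Z w₁ w₂ →
    ((∀ p, V p w₁ ↔ V p w₂) ∧
      ∀ u₁ d₁ : W, (w₁ ≤ u₁ ∨ u₁ ≤ w₁) → d₁ ≤ u₁ →
        ∃ (ℓ₂ : ℕ) (π₂ : ℕ → W), PMPath (· ≤ ·) π₂ ℓ₂ ∧ π₂ 0 = w₂ ∧
          Z d₁ (π₂ ℓ₂) ∧ ∀ j < ℓ₂, Z w₁ (π₂ j) ∨ Z u₁ (π₂ j))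

lemma pm_to_dpath {W : Type*} {R : W → W → Prop} {π : ℕ → W} {ℓ : ℕ}
    (h : PMPath R π ℓ) : DPath R π ℓ :=
  ⟨le_trans one_le_two h.1, h.2.1, h.2.2.2⟩

lemma dpath_concat {W : Type*} [PartialOrder W] (σ τ : ℕ → W) (ℓ m : ℕ)
    (hσ : PMPath (· ≤ ·) σ ℓ) (hτ : DPath (· ≤ ·) τ m) (hj : σ ℓ = τ 0) :
    ∃ ρ : ℕ → W, DPath (· ≤ ·) ρ (ℓ + m) ∧ ρ 0 = σ 0 ∧ ρ (ℓ + m) = τ m ∧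
      ∀ j < ℓ + m, (∃ i < ℓ, ρ j = σ i) ∨ (∃ i < m, ρ j = τ i) := by
  obtain ⟨hℓ2, hσU, _, _⟩ := hσ
  obtain ⟨hm1, hτU, hτlast⟩ := hτ
  refine ⟨fun j => if j < ℓ then σ j else τ (j - ℓ), ?_, ?_, ?_, ?_⟩ <;> dsimp -failIfUnchanged only
  · refine ⟨by omega, ?_, ?_⟩
    · intro i hi
      by_cases h1 : i + 1 < ℓ
      · simp only [if_pos (by omega : i < ℓ), if_pos h1]
        exact hσU i (by omega)
      · by_cases h2 : i < ℓ
        · have he : i + 1 = ℓ := by omega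
          simp only [if_pos h2, if_neg h1]
          have : i + 1 - ℓ = 0 := by omega
          rw [this, ← hj, ← he]
          exact hσU i (by omega)
        · simp only [if_neg h1, if_neg h2]
          have : i + 1 - ℓ = (i - ℓ) + 1 := by omega
          rw [this]
          exact hτU (i - ℓ) (by omega)
    · simp only
      rw [if_neg (by omega : ¬ (ℓ + m < ℓ)), if_neg (by omega : ¬ (ℓ + m - 1 < ℓ))]
      have e1 : ℓ + m - ℓ = m := by omega
      have e2 : ℓ + m - 1 - ℓ = m - 1 := by omega
      rw [e1, e2]
      exact hτlast
  · rw [if_pos (by omega : (0:ℕ) < ℓ)]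
  · rw [if_neg (by omega : ¬ (ℓ + m < ℓ))]
    congr 1; omega
  · intro j hjlt
    by_cases h2 : j < ℓ
    · exact Or.inl ⟨j, h2, by rw [if_pos h2]⟩
    · exact Or.inr ⟨j - ℓ, by omega, by rw [if_neg h2]⟩

lemma wpm_step {W PL : Type*} [PartialOrder W] (V : PL → W → Prop)
    (Z : W → W → Prop) (hZ : IsWPMBisim V Z) (w₁ w₂ v : W) (hw : Z w₁ w₂)
    (hcomp : w₁ ≤ v ∨ v ≤ w₁) :
    ∃ (ℓ : ℕ) (σ : ℕ → W), PMPath (· ≤ ·) σ ℓ ∧ σ 0 = w₂ ∧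
      Z v (σ ℓ) ∧ ∀ j < ℓ, Z w₁ (σ j) ∨ Z v (σ j) := by
  obtain ⟨_, hbis⟩ := hZ
  rcases hcomp with h | h
  · obtain ⟨ℓ, σ, hσ, h0, he, hmid⟩ := (hbis w₁ w₂ hw).2 v v (Or.inl h) le_rfl
    exact ⟨ℓ, σ, hσ, h0, he, hmid⟩
  · obtain ⟨ℓ, σ, hσ, h0, he, hmid⟩ := (hbis w₁ w₂ hw).2 w₁ v (Or.inl le_rfl) h
    exact ⟨ℓ, σ, hσ, h0, he, fun j hj => Or.inl ((hmid j hj).elim id id)⟩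

/-- Lemma: if `Z` is a weak ±-bisimulation and `Z w₁ w₂`, then every down-path from `w₁`
is matched by a down-path from `w₂`: the endpoints are `Z`-related and every non-final
element of the second path is `Z`-related to some non-final element of the first. -/
theorem wpm_bisim_down_path {W PL : Type*} [PartialOrder W] [Finite W]
    (V : PL → W → Prop) (Z : W → W → Prop) (hZ : IsWPMBisim V Z)
    (w₁ w₂ : W) (hw : Z w₁ w₂)
    (k₁ : ℕ) (π₁ : ℕ → W) (hπ₁ : DPath (· ≤ ·) π₁ k₁) (h0 : π₁ 0 = w₁) :
    ∃ (k₂ : ℕ) (π₂ : ℕ → W), DPath (· ≤ ·) π₂ k₂ ∧ π₂ 0 = w₂ ∧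
      Z (π₁ k₁) (π₂ k₂) ∧ ∀ j < k₂, ∃ i < k₁, Z (π₁ i) (π₂ j) := by
  
  induction k₁ using Nat.strong_induction_on generalizing π₁ w₁ w₂ with
  | _ k₁ IH =>
  obtain ⟨hk1, hU, hlast⟩ := hπ₁
  rcases Nat.lt_or_ge k₁ 2 with hk | hk
  · have hk1e : k₁ = 1 := by omega
    subst hk1e
    have hd : π₁ 1 ≤ π₁ 0 := hlast
    obtain ⟨_, hbis⟩ := hZ
    obtain ⟨ℓ, σ, hσ, h0', he, hmid⟩ :=
      (hbis w₁ w₂ hw).2 w₁ (π₁ 1) (Or.inl le_rfl) (by rw [← h0]; exact hd)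
    exact ⟨ℓ, σ, pm_to_dpath hσ, h0', he,
      fun j hj => ⟨0, by omega, by rw [h0]; exact (hmid j hj).elim id id⟩⟩
  · have hcomp : π₁ 0 ≤ π₁ 1 ∨ π₁ 1 ≤ π₁ 0 := hU 0 (by omega)
    have hcomp' : w₁ ≤ π₁ 1 ∨ π₁ 1 ≤ w₁ := by rw [← h0]; exact hcomp
    obtain ⟨ℓ, σ, hσ, hσ0, hZe, hσmid⟩ := wpm_step V Z hZ w₁ w₂ (π₁ 1) hw hcomp'
    have hD' : DPath (· ≤ ·) (fun i => π₁ (i + 1)) (k₁ - 1) := by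
      refine ⟨by omega, fun i hi => hU (i+1) (by omega), ?_⟩
      show π₁ (k₁ - 1 + 1) ≤ π₁ (k₁ - 1 - 1 + 1)
      have e1 : k₁ - 1 + 1 = k₁ := by omega
      have e2 : k₁ - 1 - 1 + 1 = k₁ - 1 := by omega
      rw [e1, e2]; exact hlast
    obtain ⟨m, τ, hτ, hτ0, hτend, hτmid⟩ :=
      IH (k₁ - 1) (by omega) (π₁ 1) (σ ℓ) hZe (fun i => π₁ (i + 1)) hD' rfl
    obtain ⟨ρ, hρD, hρ0, hρend, hρmid⟩ := dpath_concat σ τ ℓ m hσ hτ hτ0.symm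
    refine ⟨ℓ + m, ρ, hρD, by rw [hρ0, hσ0], ?_, ?_⟩
    · rw [hρend]
      have e : k₁ - 1 + 1 = k₁ := by omega
      have := hτend
      simp only [e] at this
      exact this
    · intro j hj
      rcases hρmid j hj with ⟨i, hi, hEq⟩ | ⟨i, hi, hEq⟩
      · rw [hEq]
        rcases hσmid i hi with h | h
        · exact ⟨0, by omega, by rw [h0]; exact h⟩
        · exact ⟨1, by omega, h⟩
      · rw [hEq]
        obtain ⟨i', hi', hZi⟩ := hτmid i hi
        exact ⟨i' + 1, by omega, hZi⟩
end

section
/- Let F = (W,≼,V) be a finite poset model and Z ⊆ W×W a weak ±-bisimulation. Then for all w₁,w₂ with Z(w₁,w₂): if w₁ ⊨ η(Φ₁,Φ₂) then w₂ ⊨ η(Φ₁,Φ₂), for all SLCS_η formulas; consequently, weakly ±-bisimilar elements are SLCS_η logically equivalent. -/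
/-- Concatenation of two ±-paths sharing an endpoint is a ±-path. -/
lemma pm_concat {W : Type*} {R : W → W → Prop} {π ρ : ℕ → W} {ℓ m : ℕ}
    (hπ : PMPath R π ℓ) (hρ : PMPath R ρ m) (hglue : π ℓ = ρ 0) :
    ∃ σ : ℕ → W, PMPath R σ (ℓ + m) ∧ (∀ i ≤ ℓ, σ i = π i) ∧
      (∀ j ≤ m, σ (ℓ + j) = ρ j) := by
  obtain ⟨hℓ2, hπu, hπ0, hπl⟩ := hπ
  obtain ⟨hm2, hρu, hρ0, hρl⟩ := hρ
  refine ⟨fun j => if j ≤ ℓ then π j else ρ (j - ℓ), ⟨by omega, ?_, ?_, ?_⟩, ?_, ?_⟩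
  · intro i hi
    by_cases h1 : i + 1 ≤ ℓ
    · simp only [if_pos (by omega : i ≤ ℓ), if_pos h1]
      exact hπu i (by omega)
    · by_cases h0 : i ≤ ℓ
      · have hiℓ : i = ℓ := by omega
        subst hiℓ
        simp only [if_pos h0, if_neg h1]
        have e : i + 1 - i = 1 := by omega
        rw [e, hglue]
        exact hρu 0 (by omega)
      · simp only [if_neg h0, if_neg h1]
        have : i + 1 - ℓ = (i - ℓ) + 1 := by omega
        rw [this]
        exact hρu (i - ℓ) (by omega)
  · simp only [if_pos (by omega : (0:ℕ) ≤ ℓ), if_pos (by omega : (1:ℕ) ≤ ℓ)]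
    exact hπ0
  · simp only [if_neg (by omega : ¬ ℓ + m ≤ ℓ), if_neg (by omega : ¬ ℓ + m - 1 ≤ ℓ)]
    have e1 : ℓ + m - ℓ = m := by omega
    have e2 : ℓ + m - 1 - ℓ = m - 1 := by omega
    rw [e1, e2]; exact hρl
  · intro i hi; simp only [if_pos hi]
  · intro j hj
    by_cases h : ℓ + j ≤ ℓ
    · have hj0 : j = 0 := by omega
      subst hj0
      simp only [Nat.add_zero, if_pos (le_refl ℓ)]
      exact hglue
    · simp only [if_neg h]
      congr 1
      omega

/-- Path-transfer lemma: along a weak ±-bisimulation, an undirected path ending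
with a down-step can be matched by a ±-path whose points are `Z`-related to
points of the original path. -/
lemma wpm_transfer {W PL : Type*} [PartialOrder W] {V : PL → W → Prop}
    {Z : W → W → Prop} (hZ : IsWPMBisim V Z) :
    ∀ ℓ : ℕ, 1 ≤ ℓ → ∀ (π : ℕ → W) (w₂ : W), UPath (· ≤ ·) π ℓ →
      π ℓ ≤ π (ℓ - 1) → Z (π 0) w₂ →
      ∃ (m : ℕ) (ρ : ℕ → W), PMPath (· ≤ ·) ρ m ∧ ρ 0 = w₂ ∧ Z (π ℓ) (ρ m) ∧
        ∀ j < m, ∃ i < ℓ, Z (π i) (ρ j) := by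
  intro ℓ
  induction ℓ with
  | zero => omega
  | succ ℓ ih =>
    intro _ π w₂ hu hdown hZ0
    rcases Nat.eq_zero_or_pos ℓ with hℓ0 | hℓ1
    · -- base case: single down-step
      subst hℓ0
      obtain ⟨m, ρ, hρ, hρ0, hend, hint⟩ :=
        (hZ.2 (π 0) w₂ hZ0).2 (π 0) (π 1) (Or.inl le_rfl) hdown
      exact ⟨m, ρ, hρ, hρ0, hend, fun j hj =>
        ⟨0, by omega, (hint j hj).elim id id⟩⟩
    · -- inductive step: simulate the first step, then use the IH on the tail
      have h01 : π 0 ≤ π 1 ∨ π 1 ≤ π 0 := hu 0 (by omega)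
      obtain ⟨m₁, ρ₁, hρ₁, hρ₁0, hend₁, hint₁⟩ :=
        (hZ.2 (π 0) w₂ hZ0).2 (π 1) (π 1) h01 le_rfl
      have hu' : UPath (· ≤ ·) (fun i => π (i + 1)) ℓ := fun i hi => hu (i + 1) (by omega)
      have hdown' : (fun i => π (i + 1)) ℓ ≤ (fun i => π (i + 1)) (ℓ - 1) := by
        simp only
        have : ℓ - 1 + 1 = ℓ := by omega
        rw [this]
        have e : ℓ + 1 - 1 = ℓ := by omega
        rw [e] at hdown
        exact hdown
      obtain ⟨m₂, ρ₂, hρ₂, hρ₂0, hend₂, hint₂⟩ :=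
        ih hℓ1 (fun i => π (i + 1)) (ρ₁ m₁) hu' hdown' hend₁
      obtain ⟨σ, hσ, hσ₁, hσ₂⟩ := pm_concat hρ₁ hρ₂ hρ₂0.symm
      refine ⟨m₁ + m₂, σ, hσ, ?_, ?_, ?_⟩
      · rw [hσ₁ 0 (by omega)]; exact hρ₁0
      · rw [hσ₂ m₂ le_rfl]; exact hend₂
      · intro j hj
        rcases lt_trichotomy j m₁ with h | h | h
        · rw [hσ₁ j (by omega)]
          rcases hint₁ j h with hz | hz
          · exact ⟨0, by omega, hz⟩
          · exact ⟨1, by omega, hz⟩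
        · subst h
          rw [hσ₁ j le_rfl]
          exact ⟨1, by omega, hend₁⟩
        · have : j = m₁ + (j - m₁) := by omega
          rw [this, hσ₂ (j - m₁) (by omega)]
          obtain ⟨i, hi, hz⟩ := hint₂ (j - m₁) (by omega)
          exact ⟨i + 1, by omega, hz⟩

/-- Lemma: weak ±-bisimulations preserve `η`-formulas, and consequently weakly
±-bisimilar elements of a finite poset model are SLCS_η logically equivalent. -/
theorem wpm_bisim_implies_eqEta {W PL : Type*} [PartialOrder W] [Finite W]
    (V : PL → W → Prop) (Z : W → W → Prop) (hZ : IsWPMBisim V Z)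
    (w₁ w₂ : W) (hw : Z w₁ w₂) :
    (∀ Φ₁ Φ₂ : SLCS PL,
        sat (· ≤ ·) V (.eta Φ₁ Φ₂) w₁ → sat (· ≤ ·) V (.eta Φ₁ Φ₂) w₂) ∧
    (∀ Φ : SLCS PL, sat (· ≤ ·) V Φ w₁ ↔ sat (· ≤ ·) V Φ w₂) := by
  have key : ∀ Φ : SLCS PL, ∀ a b : W, Z a b →
      (sat (· ≤ ·) V Φ a ↔ sat (· ≤ ·) V Φ b) := by
    intro Φ
    induction Φ with
    | ap p => intro a b hab; exact (hZ.2 a b hab).1 p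
    | neg φ ih =>
      intro a b hab
      simp only [sat]
      exact not_congr (ih a b hab)
    | conj φ ψ ih1 ih2 =>
      intro a b hab
      simp only [sat]
      exact and_congr (ih1 a b hab) (ih2 a b hab)
    | eta φ ψ ih1 ih2 =>
      have dir : ∀ a b : W, Z a b →
          sat (· ≤ ·) V (.eta φ ψ) a → sat (· ≤ ·) V (.eta φ ψ) b := by
        intro a b hab hsat
        obtain ⟨ℓ, π, hpm, h0, hψ, hφ⟩ := hsat
        obtain ⟨m, ρ, hρ, hρ0, hend, hint⟩ :=
          wpm_transfer hZ ℓ (le_trans one_le_two hpm.1) π b hpm.2.1 hpm.2.2.2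
            (by rw [h0]; exact hab)
        refine ⟨m, ρ, hρ, hρ0, (ih2 _ _ hend).mp hψ, ?_⟩
        intro j hj
        obtain ⟨i, hi, hz⟩ := hint j hj
        exact (ih1 _ _ hz).mp (hφ i hi)
      intro a b hab
      exact ⟨dir a b hab, dir b a (hZ.1 hab)⟩
  exact ⟨fun Φ₁ Φ₂ => (key (.eta Φ₁ Φ₂) w₁ w₂ hw).mp, fun Φ => key Φ w₁ w₂ hw⟩
end

section
/- Let F = (W,≼,V) be a finite poset model. Then SLCS_η logical equivalence ≡_η is itself a weak ±-bisimulation on W. Consequently (together with the converse direction) two elements of W are weakly ±-bisimilar if and only if they are SLCS_η logically equivalent (Hennessy–Milner property). -/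
/-- SLCS_η logical equivalence on a poset model. -/
def eqEta {W PL : Type*} [PartialOrder W] (V : PL → W → Prop) (w₁ w₂ : W) : Prop :=
  ∀ Φ : SLCS PL, sat (· ≤ ·) V Φ w₁ ↔ sat (· ≤ ·) V Φ w₂

section HM

variable {W PL : Type*} [PartialOrder W]

/-- Concatenation of two paths, the second starting where the first ends. -/
private def pcat (σ τ : ℕ → W) (m : ℕ) : ℕ → W := fun j => if j ≤ m then σ j else τ (j - m)

private lemma pcat_left {σ τ : ℕ → W} {m j : ℕ} (h : j ≤ m) : pcat σ τ m j = σ j := if_pos h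

private lemma pcat_right {σ τ : ℕ → W} {m j : ℕ} (h0 : τ 0 = σ m) (h : m ≤ j) :
    pcat σ τ m j = τ (j - m) := by
  rcases eq_or_lt_of_le h with rfl | hlt
  · simp [pcat, h0]
  · exact if_neg (by omega)

private lemma pcat_pm {σ τ : ℕ → W} {m n : ℕ} (hσ : PMPath (· ≤ ·) σ m)
    (hτ : PMPath (· ≤ ·) τ n) (h0 : τ 0 = σ m) : PMPath (· ≤ ·) (pcat σ τ m) (m + n) := by
  obtain ⟨hm2, hσu, hσ0, hσl⟩ := hσ
  obtain ⟨hn2, hτu, hτ0, hτl⟩ := hτ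
  refine ⟨by omega, ?_, ?_, ?_⟩
  · intro i hi
    rcases lt_or_ge i m with h | h
    · rw [pcat_left (by omega), pcat_left (by omega)]
      exact hσu i h
    · rw [pcat_right h0 h, pcat_right h0 (by omega)]
      have he : i + 1 - m = i - m + 1 := by omega
      rw [he]
      exact hτu (i - m) (by omega)
  · rw [pcat_left (by omega), pcat_left (by omega)]
    exact hσ0
  · have h1 : pcat σ τ m (m + n) = τ n := by rw [pcat_right h0 (by omega)]; congr 1; omega
    have h2 : pcat σ τ m (m + n - 1) = τ (n - 1) := by
      rw [pcat_right h0 (by omega)]; congr 1; omega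
    rw [h1, h2]
    exact hτl

/-- Path simulation: a path ending with a down-step can be simulated across `Z`. -/
private lemma sim {Z : W → W → Prop} {V : PL → W → Prop} (hZ : IsWPMBisim V Z) :
    ∀ ℓ : ℕ, 1 ≤ ℓ → ∀ π : ℕ → W, UPath (· ≤ ·) π ℓ → π ℓ ≤ π (ℓ - 1) →
    ∀ w₂, Z (π 0) w₂ →
    ∃ (ℓ₂ : ℕ) (π₂ : ℕ → W), PMPath (· ≤ ·) π₂ ℓ₂ ∧ π₂ 0 = w₂ ∧ Z (π ℓ) (π₂ ℓ₂) ∧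
      ∀ j < ℓ₂, ∃ i < ℓ, Z (π i) (π₂ j) := by
  intro ℓ
  induction ℓ with
  | zero => intro h; exact absurd h (by omega)
  | succ ℓ ih =>
    intro _ π hu hdown w₂ hZw
    rcases Nat.eq_zero_or_pos ℓ with rfl | hℓ
    · -- single down-step
      have hd : π 1 ≤ π 0 := by simpa using hdown
      obtain ⟨m, σ, h1, h2, h3, h4⟩ := (hZ.2 _ _ hZw).2 (π 0) (π 1) (Or.inl le_rfl) hd
      exact ⟨m, σ, h1, h2, h3, fun j hj => ⟨0, by omega, (h4 j hj).elim id id⟩⟩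
    · -- simulate the first step, then use the IH on the shifted path
      have step1 : ∃ (m : ℕ) (σ : ℕ → W), PMPath (· ≤ ·) σ m ∧ σ 0 = w₂ ∧ Z (π 1) (σ m) ∧
          ∀ j < m, Z (π 0) (σ j) ∨ Z (π 1) (σ j) := by
        rcases hu 0 (by omega) with h01 | h10
        · obtain ⟨m, σ, h1, h2, h3, h4⟩ := (hZ.2 _ _ hZw).2 (π 1) (π 1) (Or.inl h01) le_rfl
          exact ⟨m, σ, h1, h2, h3, h4⟩
        · obtain ⟨m, σ, h1, h2, h3, h4⟩ := (hZ.2 _ _ hZw).2 (π 0) (π 1) (Or.inl le_rfl) h10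
          exact ⟨m, σ, h1, h2, h3, fun j hj => (h4 j hj).elim Or.inl Or.inl⟩
      obtain ⟨m, σ, hσpm, hσ0, hσend, hσmid⟩ := step1
      have hdown' : (fun k => π (k + 1)) ℓ ≤ (fun k => π (k + 1)) (ℓ - 1) := by
        have he : ℓ - 1 + 1 = ℓ := by omega
        simp only
        rw [he]
        simpa using hdown
      obtain ⟨n, τ, hτpm, hτ0, hτend, hτmid⟩ := ih hℓ (fun k => π (k + 1))
        (fun i hi => hu (i + 1) (by omega)) hdown' (σ m) hσend
      refine ⟨m + n, pcat σ τ m, pcat_pm hσpm hτpm hτ0, ?_, ?_, ?_⟩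
      · rw [pcat_left (by omega)]; exact hσ0
      · have h1 : pcat σ τ m (m + n) = τ n := by rw [pcat_right hτ0 (by omega)]; congr 1; omega
        rw [h1]
        exact hτend
      · intro j hj
        rcases lt_or_ge j m with h | h
        · rw [pcat_left (by omega)]
          rcases hσmid j h with h' | h'
          · exact ⟨0, by omega, h'⟩
          · exact ⟨1, by omega, h'⟩
        · rw [pcat_right hτ0 h]
          obtain ⟨i, hi, hzi⟩ := hτmid (j - m) (by omega)
          exact ⟨i + 1, by omega, hzi⟩

/-- `Z`-related points satisfy the same formulas. -/
private lemma bisim_sat {Z : W → W → Prop} {V : PL → W → Prop} (hZ : IsWPMBisim V Z)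
    (Φ : SLCS PL) : ∀ w₁ w₂, Z w₁ w₂ → (sat (· ≤ ·) V Φ w₁ ↔ sat (· ≤ ·) V Φ w₂) := by
  induction Φ with
  | ap p => exact fun w₁ w₂ h => (hZ.2 _ _ h).1 p
  | neg φ ih => exact fun w₁ w₂ h => not_congr (ih _ _ h)
  | conj φ ψ ih1 ih2 => exact fun w₁ w₂ h => and_congr (ih1 _ _ h) (ih2 _ _ h)
  | eta φ ψ ih1 ih2 =>
    have key : ∀ w₁ w₂, Z w₁ w₂ →
        sat (· ≤ ·) V (.eta φ ψ) w₁ → sat (· ≤ ·) V (.eta φ ψ) w₂ := by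
      rintro w₁ w₂ h ⟨ℓ, π, hpm, h0, hend, hmid⟩
      have h2 : 2 ≤ ℓ := hpm.1
      obtain ⟨ℓ₂, π₂, h2pm, h20, h2end, h2mid⟩ :=
        sim hZ ℓ (by omega) π hpm.2.1 hpm.2.2.2 w₂ (by rw [h0]; exact h)
      refine ⟨ℓ₂, π₂, h2pm, h20, (ih2 _ _ h2end).mp hend, fun j hj => ?_⟩
      obtain ⟨i, hi, hz⟩ := h2mid j hj
      exact (ih1 _ _ hz).mp (hmid i hi)
    exact fun w₁ w₂ h => ⟨key _ _ h, key _ _ (hZ.1 h)⟩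

private lemma exists_dist {V : PL → W → Prop} {x y : W} (h : ¬ eqEta V x y) :
    ∃ δ : SLCS PL, sat (· ≤ ·) V δ x ∧ ¬ sat (· ≤ ·) V δ y := by
  simp only [eqEta, not_forall] at h
  obtain ⟨Φ, hΦ⟩ := h
  by_cases hx : sat (· ≤ ·) V Φ x
  · exact ⟨Φ, hx, fun hy => hΦ (iff_of_true hx hy)⟩
  · exact ⟨.neg Φ, hx, fun hy => hΦ (iff_of_false hx hy)⟩

private lemma sat_foldr {V : PL → W → Prop} (l : List (SLCS PL)) (φ : SLCS PL) (x : W) :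
    sat (· ≤ ·) V (l.foldr .conj φ) x ↔
      sat (· ≤ ·) V φ x ∧ ∀ ψ ∈ l, sat (· ≤ ·) V ψ x := by
  induction l with
  | nil => simp
  | cons a l ih =>
    show sat (· ≤ ·) V a x ∧ _ ↔ _
    rw [ih]
    constructor
    · rintro ⟨h1, h2, h3⟩
      exact ⟨h2, fun ψ hψ => by rcases List.mem_cons.mp hψ with rfl | h; exacts [h1, h3 ψ h]⟩
    · rintro ⟨h1, h2⟩
      exact ⟨h2 a (by simp), h1, fun ψ hψ => h2 ψ (by simp [hψ])⟩

private lemma eqEta_refl (V : PL → W → Prop) (x : W) : eqEta V x x := fun _ => Iff.rfl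

private lemma eqEta_zigzag [Finite W] {V : PL → W → Prop} {w₁ w₂ u₁ d₁ : W}
    (h : eqEta V w₁ w₂) (hu : w₁ ≤ u₁ ∨ u₁ ≤ w₁) (hd : d₁ ≤ u₁) :
    ∃ (ℓ₂ : ℕ) (π₂ : ℕ → W), PMPath (· ≤ ·) π₂ ℓ₂ ∧ π₂ 0 = w₂ ∧ eqEta V d₁ (π₂ ℓ₂) ∧
      ∀ j < ℓ₂, eqEta V w₁ (π₂ j) ∨ eqEta V u₁ (π₂ j) := by
  classical
  by_cases hT : ∀ v : W, eqEta V d₁ v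
  · exact ⟨2, fun _ => w₂, ⟨le_rfl, fun i _ => Or.inl le_rfl, le_rfl, le_rfl⟩, rfl,
      hT w₂, fun j _ => Or.inl h⟩
  push_neg at hT
  obtain ⟨t, ht⟩ := hT
  obtain ⟨δ₀, hδ0, -⟩ := exists_dist ht
  -- characteristic formula of the class of d₁
  have hβ : ∀ v : W, ∃ β : SLCS PL, sat (· ≤ ·) V β d₁ ∧
      (¬ eqEta V d₁ v → ¬ sat (· ≤ ·) V β v) := by
    intro v
    by_cases hv : eqEta V d₁ v
    · exact ⟨δ₀, hδ0, fun hc => absurd hv hc⟩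
    · obtain ⟨β, h1, h2⟩ := exists_dist hv
      exact ⟨β, h1, fun _ => h2⟩
  choose β hβ1 hβ2 using hβ
  have : Fintype W := Fintype.ofFinite W
  set lW : List W := (Finset.univ : Finset W).toList with hlW
  have hmemW : ∀ v : W, v ∈ lW := by intro v; simp [hlW]
  set B : SLCS PL := (lW.map β).foldr .conj δ₀ with hB
  have hBsat : ∀ x : W, sat (· ≤ ·) V B x ↔ eqEta V d₁ x := by
    intro x
    rw [hB, sat_foldr]
    constructor
    · rintro ⟨-, hall⟩
      by_contra hc
      exact hβ2 x hc (hall (β x) (List.mem_map_of_mem (f := β) (hmemW x)))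
    · intro hx
      refine ⟨(hx δ₀).mp hδ0, ?_⟩
      intro ψ hψ
      rw [List.mem_map] at hψ
      obtain ⟨v, -, rfl⟩ := hψ
      exact (hx (β v)).mp (hβ1 v)
  -- a formula covering the classes of w₁ and u₁
  have hAex : ∃ A : SLCS PL, sat (· ≤ ·) V A w₁ ∧ sat (· ≤ ·) V A u₁ ∧
      ∀ x, sat (· ≤ ·) V A x → eqEta V w₁ x ∨ eqEta V u₁ x := by
    by_cases hS : ∀ v : W, eqEta V w₁ v ∨ eqEta V u₁ v
    · refine ⟨.neg (.conj δ₀ (.neg δ₀)), ?_, ?_, fun x _ => hS x⟩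
      · exact fun hc => hc.2 hc.1
      · exact fun hc => hc.2 hc.1
    · have hav : ∀ v : W, ∃ a : SLCS PL, sat (· ≤ ·) V a w₁ ∧ sat (· ≤ ·) V a u₁ ∧
          ((¬ eqEta V w₁ v ∧ ¬ eqEta V u₁ v) → ¬ sat (· ≤ ·) V a v) := by
        intro v
        by_cases hv : ¬ eqEta V w₁ v ∧ ¬ eqEta V u₁ v
        · obtain ⟨a, ha1, ha2⟩ := exists_dist hv.1
          obtain ⟨b, hb1, hb2⟩ := exists_dist hv.2
          refine ⟨.neg (.conj (.neg a) (.neg b)), ?_, ?_, fun _ hc => hc ⟨ha2, hb2⟩⟩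
          · exact fun hc => hc.1 ha1
          · exact fun hc => hc.2 hb1
        · exact ⟨.neg (.conj δ₀ (.neg δ₀)), fun hc => hc.2 hc.1, fun hc => hc.2 hc.1,
            fun hb => absurd hb hv⟩
      choose a ha1 ha2 ha3 using hav
      refine ⟨(lW.map a).foldr .conj (.neg (.conj δ₀ (.neg δ₀))), ?_, ?_, ?_⟩
      · rw [sat_foldr]
        refine ⟨fun hc => hc.2 hc.1, ?_⟩
        intro ψ hψ; rw [List.mem_map] at hψ; obtain ⟨v, -, rfl⟩ := hψ; exact ha1 v
      · rw [sat_foldr]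
        refine ⟨fun hc => hc.2 hc.1, ?_⟩
        intro ψ hψ; rw [List.mem_map] at hψ; obtain ⟨v, -, rfl⟩ := hψ; exact ha2 v
      · intro x hx
        rw [sat_foldr] at hx
        by_contra hc
        push_neg at hc
        exact ha3 x hc (hx.2 (a x) (List.mem_map_of_mem (f := a) (hmemW x)))
  obtain ⟨A, hAw, hAu, hAx⟩ := hAex
  obtain ⟨mid, hm1, hm2, hmA⟩ : ∃ mid, w₁ ≤ mid ∧ d₁ ≤ mid ∧ sat (· ≤ ·) V A mid := by
    rcases hu with h' | h'
    · exact ⟨u₁, h', hd, hAu⟩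
    · exact ⟨w₁, le_rfl, hd.trans h', hAw⟩
  -- w₁ satisfies η(A, B) via the path w₁ ≤ mid ≥ d₁
  have hsat1 : sat (· ≤ ·) V (.eta A B) w₁ := by
    refine ⟨2, fun i => if i = 0 then w₁ else if i = 1 then mid else d₁,
      ⟨le_rfl, ?_, ?_, ?_⟩, rfl, ?_, ?_⟩
    · intro i hi
      interval_cases i
      · exact Or.inl (by simpa using hm1)
      · exact Or.inr (by simpa using hm2)
    · simpa using hm1
    · simpa using hm2
    · simpa using (hBsat d₁).mpr (eqEta_refl V d₁)
    · intro i hi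
      interval_cases i
      · simpa using hAw
      · simpa using hmA
  obtain ⟨ℓ₂, π₂, hpm, h0, hend, hmid⟩ := (h (.eta A B)).mp hsat1
  exact ⟨ℓ₂, π₂, hpm, h0, (hBsat _).mp hend, fun j hj => hAx _ (hmid j hj)⟩

end HM

/-- Theorem (Hennessy–Milner property for weak ±-bisimilarity): in a finite poset model,
SLCS_η logical equivalence is itself a weak ±-bisimulation, and two elements are weakly
±-bisimilar iff they are SLCS_η logically equivalent. -/
theorem wpm_bisimilar_iff_eqEta {W PL : Type*} [PartialOrder W] [Finite W]
    (V : PL → W → Prop) :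
    IsWPMBisim V (eqEta V) ∧
    ∀ w₁ w₂ : W,
      (∃ Z : W → W → Prop, IsWPMBisim V Z ∧ Z w₁ w₂) ↔ eqEta V w₁ w₂ := by
  have part1 : IsWPMBisim V (eqEta V) := by
    refine ⟨fun w₁ w₂ h Φ => (h Φ).symm, fun w₁ w₂ h => ⟨fun p => h (.ap p), ?_⟩⟩
    intro u₁ d₁ hu hd
    exact eqEta_zigzag h hu hd
  refine ⟨part1, fun w₁ w₂ => ⟨?_, fun h => ⟨eqEta V, part1, h⟩⟩⟩
  rintro ⟨Z, hZ, hw⟩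
  exact fun Φ => bisim_sat hZ Φ _ _ hw
end

section
/- Let F = (W,≼,V) be a finite poset model and let ⇌ be defined by: w₁ ⇌ w₂ iff there is an undirected path connecting w₁ to w₂ all of whose elements satisfy the same proposition letters. Then for all w₁, w₂ ∈ W: if w₁ ⇌ w₂, then w₁ ≡_η w₂ (they satisfy the same SLCS_η formulas). -/
/-- The relation `⇌` on a poset model: `w₁ ⇌ w₂` iff there is an undirected path from
`w₁` to `w₂` all of whose elements satisfy exactly the same proposition letters. -/
def cc {W PL : Type*} [PartialOrder W] (V : PL → W → Prop) (w₁ w₂ : W) : Prop :=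
  ∃ (ℓ : ℕ) (π : ℕ → W), UPath (· ≤ ·) π ℓ ∧ π 0 = w₁ ∧ π ℓ = w₂ ∧
    ∀ i ≤ ℓ, ∀ j ≤ ℓ, ∀ p, V p (π i) ↔ V p (π j)

lemma cc_symm {W PL : Type*} [PartialOrder W] (V : PL → W → Prop) {w₁ w₂ : W}
    (h : cc V w₁ w₂) : cc V w₂ w₁ := by
  obtain ⟨ℓ, σ, hu, h0, hl, hv⟩ := h
  refine ⟨ℓ, fun i => σ (ℓ - i), fun i hi => ?_, by simpa, by simpa using h0,
    fun i hi j hj p => hv _ (Nat.sub_le _ _) _ (Nat.sub_le _ _) p⟩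
  have := hu (ℓ - (i + 1)) (by omega)
  have e1 : ℓ - (i + 1) + 1 = ℓ - i := by omega
  rw [e1] at this
  tauto

lemma cc_suffix {W PL : Type*} [PartialOrder W] (V : PL → W → Prop) {ℓ : ℕ} {σ : ℕ → W}
    (hu : UPath (· ≤ ·) σ ℓ)
    (hv : ∀ i ≤ ℓ, ∀ j ≤ ℓ, ∀ p, V p (σ i) ↔ V p (σ j)) {j : ℕ} (hj : j ≤ ℓ) :
    cc V (σ j) (σ ℓ) := by
  refine ⟨ℓ - j, fun i => σ (j + i), fun i hi => ?_, by simp, by show σ (j + (ℓ - j)) = σ ℓ; rw [Nat.add_sub_cancel' hj],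
    fun a ha b hb p => hv _ (by omega) _ (by omega) p⟩
  have := hu (j + i) (by omega)
  tauto

lemma key {W PL : Type*} [PartialOrder W] (V : PL → W → Prop) :
    ∀ Φ : SLCS PL, ∀ w₁ w₂ : W, cc V w₁ w₂ →
      (sat (· ≤ ·) V Φ w₁ ↔ sat (· ≤ ·) V Φ w₂) := by
  intro Φ
  induction Φ with
  | ap p =>
    intro w₁ w₂ ⟨ℓ, σ, hu, h0, hl, hv⟩
    simpa [sat, h0, hl] using hv 0 (Nat.zero_le _) ℓ le_rfl p
  | neg φ ih =>
    intro w₁ w₂ h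
    simp [sat, ih w₁ w₂ h]
  | conj φ ψ ih1 ih2 =>
    intro w₁ w₂ h
    simp [sat, ih1 w₁ w₂ h, ih2 w₁ w₂ h]
  | eta φ ψ ih1 ih2 =>
    suffices H : ∀ w₁ w₂ : W, cc V w₁ w₂ →
        sat (· ≤ ·) V (.eta φ ψ) w₂ → sat (· ≤ ·) V (.eta φ ψ) w₁ by
      exact fun w₁ w₂ h => ⟨H w₂ w₁ (cc_symm V h), H w₁ w₂ h⟩
    rintro w₁ w₂ ⟨m, σ, hu, h0, hm, hv⟩ ⟨ℓ, π, ⟨hℓ2, hπu, hπ0, hπl⟩, hπw, hψ, hφ⟩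
    -- combined path
    set τ : ℕ → W := fun i => if i ≤ m + 1 then σ (i - 1) else π (i - (m + 1)) with hτ
    have hτval : ∀ i ≥ m + 1, τ i = π (i - (m + 1)) := by
      intro i hi
      rcases eq_or_lt_of_le hi with rfl | hi'
      · simp [hτ, hm, hπw, Nat.sub_self]
      · simp [hτ, Nat.not_le.mpr hi']
    refine ⟨m + 1 + ℓ, τ, ⟨by omega, ?_, ?_, ?_⟩, ?_, ?_, ?_⟩
    · -- UPath
      intro i hi
      rcases Nat.lt_or_ge i (m + 1) with hi1 | hi1
      · rcases Nat.eq_zero_or_pos i with rfl | hip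
        · left; simp [hτ]
        · have e1 : τ i = σ (i - 1) := by simp [hτ, (by omega : i ≤ m + 1)]
          have e2 : τ (i + 1) = σ i := by
            simp [hτ, (by omega : i + 1 ≤ m + 1)]
          rw [e1, e2]
          have := hu (i - 1) (by omega)
          have e3 : i - 1 + 1 = i := by omega
          rw [e3] at this; tauto
      · rw [hτval i hi1, hτval (i + 1) (by omega)]
        have := hπu (i - (m + 1)) (by omega)
        have e3 : i + 1 - (m + 1) = i - (m + 1) + 1 := by omega
        rw [e3]; tauto
    · -- first step up
      simp [hτ]
    · -- last step down
      rw [hτval _ (by omega), hτval _ (by omega)]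
      have e1 : m + 1 + ℓ - (m + 1) = ℓ := by omega
      have e2 : m + 1 + ℓ - 1 - (m + 1) = ℓ - 1 := by omega
      rw [e1, e2]; exact hπl
    · simpa [hτ] using h0
    · rw [hτval _ (by omega)]
      have e1 : m + 1 + ℓ - (m + 1) = ℓ := by omega
      rw [e1]; exact hψ
    · -- φ along the way
      intro i hi
      rcases Nat.lt_or_ge i (m + 1) with hi1 | hi1
      · have e1 : τ i = σ (i - 1) := by simp [hτ, (by omega : i ≤ m + 1)]
        rw [e1]
        have hcc : cc V (σ (i - 1)) w₂ := by
          have := cc_suffix V hu hv (j := i - 1) (by omega)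
          rwa [hm] at this
        exact (ih1 _ _ hcc).mpr (by rw [← hπw]; exact hφ 0 (by omega))
      · rw [hτval i hi1]
        exact hφ _ (by omega)

/-- Lemma: in a finite poset model, `w₁ ⇌ w₂` implies that `w₁` and `w₂` satisfy exactly
the same SLCS_η formulas. -/
theorem cc_implies_eqEta {W PL : Type*} [PartialOrder W] [Finite W]
    (V : PL → W → Prop) (w₁ w₂ : W) (h : cc V w₁ w₂) :
    ∀ Φ : SLCS PL, sat (· ≤ ·) V Φ w₁ ↔ sat (· ≤ ·) V Φ w₂ :=
  fun Φ => key V Φ w₁ w₂ h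
end

section
/- Let F = (W,≼,V) be a finite poset model. For all w₁, w₂ ∈ W: w₁ ≡_η w₂ (SLCS_η logical equivalence) if and only if [w₁]_⇌ and [w₂]_⇌ are strongly bisimilar in the abstract LTS LTS_A(F). -/
/-- Labels of the abstract LTS `LTS_A(F)`: subsets of proposition letters, plus `s`, `d`. -/
inductive ALab (PL : Type*) : Type _
  | pl : Set PL → ALab PL
  | s : ALab PL
  | d : ALab PL

/-- Transition relation of the abstract LTS `LTS_A(F)`, whose states are the
`⇌`-classes of `W`. -/
def aTrans {W PL : Type*} [PartialOrder W] (V : PL → W → Prop) :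
    Quot (cc V) → ALab PL → Quot (cc V) → Prop :=
  fun a l b =>
    match l with
    | .pl α => ∃ w : W, a = Quot.mk _ w ∧ b = Quot.mk _ w ∧ α = {p | V p w}
    | .s => ∃ w w' : W, a = Quot.mk _ w ∧ b = Quot.mk _ w' ∧ (w ≤ w' ∨ w' ≤ w)
    | .d => ∃ w w' : W, a = Quot.mk _ w ∧ b = Quot.mk _ w' ∧ w' ≤ w

/-- Strong bisimulation for an LTS with transition relation `T`. -/
def IsSBisim {S L : Type*} (T : S → L → S → Prop) (B : S → S → Prop) : Prop :=
  Symmetric B ∧ ∀ s t, B s t →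
    (∀ l s', T s l s' → ∃ t', T t l t' ∧ B s' t') ∧
    (∀ l t', T t l t' → ∃ s', T s l s' ∧ B s' t')

/-- Strong bisimilarity (strong equivalence). -/
def SBisimilar {S L : Type*} (T : S → L → S → Prop) (s t : S) : Prop :=
  ∃ B : S → S → Prop, IsSBisim T B ∧ B s t

set_option linter.unusedSectionVars false

namespace SLCSAux

variable {W PL : Type*} [PartialOrder W]

/-- logical equivalence -/
def E (V : PL → W → Prop) (u v : W) : Prop :=
  ∀ Φ : SLCS PL, sat (· ≤ ·) V Φ u ↔ sat (· ≤ ·) V Φ v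

theorem E.symm {V : PL → W → Prop} {u v : W} (h : E V u v) : E V v u := fun Φ => (h Φ).symm
theorem E.trans {V : PL → W → Prop} {u v x : W} (h : E V u v) (h' : E V v x) : E V u x :=
  fun Φ => (h Φ).trans (h' Φ)
theorem E.atoms {V : PL → W → Prop} {u v : W} (h : E V u v) (p : PL) : V p u ↔ V p v :=
  h (.ap p)

/-- path concatenation -/
def pcat (π ρ : ℕ → W) (a : ℕ) : ℕ → W := fun i => if i ≤ a then π i else ρ (i - a)

theorem pcat_left {π ρ : ℕ → W} {a i : ℕ} (h : i ≤ a) : pcat π ρ a i = π i := if_pos h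

theorem pcat_right {π ρ : ℕ → W} {a : ℕ} (hc : π a = ρ 0) (j : ℕ) :
    pcat π ρ a (a + j) = ρ j := by
  rcases Nat.eq_zero_or_pos j with rfl | h
  · simpa [pcat] using hc
  · have hna : ¬ a + j ≤ a := by omega
    simp [pcat, hna]

theorem UPath_pcat {R : W → W → Prop} {π ρ : ℕ → W} {a b : ℕ}
    (hπ : UPath R π a) (hρ : UPath R ρ b) (hc : π a = ρ 0) :
    UPath R (pcat π ρ a) (a + b) := by
  intro i hi
  rcases lt_or_ge i a with h | h
  · rw [pcat_left h.le, pcat_left (by omega)]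
    exact hπ i h
  · obtain ⟨j, rfl⟩ : ∃ j, i = a + j := ⟨i - a, by omega⟩
    rw [pcat_right hc, show a + j + 1 = a + (j + 1) by ring, pcat_right hc]
    exact hρ j (by omega)

theorem cc_refl (V : PL → W → Prop) (w : W) : cc V w w :=
  ⟨0, fun _ => w, fun i hi => absurd hi (Nat.not_lt_zero i), rfl, rfl, fun _ _ _ _ _ => Iff.rfl⟩

theorem cc_symm {V : PL → W → Prop} {u v : W} : cc V u v → cc V v u := by
  rintro ⟨ℓ, π, hU, h0, hl, hag⟩
  refine ⟨ℓ, fun i => π (ℓ - i), ?_, by simpa using hl, by simpa using h0, ?_⟩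
  · intro i hi
    have h1 : ℓ - i = (ℓ - (i + 1)) + 1 := by omega
    simp only [h1]
    exact (hU (ℓ - (i + 1)) (by omega)).symm
  · intro i hi j hj p; exact hag _ (by omega) _ (by omega) p

theorem cc_trans {V : PL → W → Prop} {u v x : W} : cc V u v → cc V v x → cc V u x := by
  rintro ⟨a, π, hU, h0, ha, hag⟩ ⟨b, ρ, hU', h0', hb', hag'⟩
  have hc : π a = ρ 0 := by rw [ha, h0']
  refine ⟨a + b, pcat π ρ a, UPath_pcat hU hU' hc,
    by rw [pcat_left (Nat.zero_le a), h0], by rw [pcat_right hc, hb'], ?_⟩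
  intro i hi j hj p
  have key : ∀ k ≤ a + b, (V p (pcat π ρ a k) ↔ V p (π a)) := by
    intro k hk
    rcases le_or_gt k a with h | h
    · rw [pcat_left h]; exact hag k (by omega) a le_rfl p
    · obtain ⟨j', rfl⟩ : ∃ j', k = a + j' := ⟨k - a, by omega⟩
      rw [pcat_right hc]
      exact (hag' _ (by omega) 0 (Nat.zero_le b) p).trans (by rw [h0', ha])
  exact (key i hi).trans (key j hj).symm

theorem cc_equivalence (V : PL → W → Prop) : Equivalence (cc V) :=
  ⟨cc_refl V, cc_symm, cc_trans⟩

theorem quot_eq {V : PL → W → Prop} {a b : W} :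
    Quot.mk (cc V) a = Quot.mk (cc V) b ↔ cc V a b := by
  rw [Quot.eq]
  exact (cc_equivalence V).eqvGen_iff

theorem cc_atoms {V : PL → W → Prop} {u v : W} (h : cc V u v) (p : PL) : V p u ↔ V p v := by
  obtain ⟨ℓ, π, _, h0, hl, hag⟩ := h
  have := hag 0 (Nat.zero_le ℓ) ℓ le_rfl p
  rwa [h0, hl] at this

theorem sat_eta_iff {V : PL → W → Prop} {φ ψ : SLCS PL} {w : W} :
    sat (· ≤ ·) V (.eta φ ψ) w ↔
      ∃ (ℓ : ℕ) (π : ℕ → W), DPath (· ≤ ·) π ℓ ∧ π 0 = w ∧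
        sat (· ≤ ·) V ψ (π ℓ) ∧ ∀ i < ℓ, sat (· ≤ ·) V φ (π i) := by
  constructor
  · rintro ⟨ℓ, π, ⟨h2, hU, _, hlast⟩, h0, hψ, hφ⟩
    exact ⟨ℓ, π, ⟨by omega, hU, hlast⟩, h0, hψ, hφ⟩
  · rintro ⟨ℓ, π, ⟨h1, hU, hlast⟩, h0, hψ, hφ⟩
    refine ⟨ℓ + 1, fun i => π (i - 1), ⟨by omega, ?_, ?_, ?_⟩, by simpa, by simpa using hψ, ?_⟩
    · intro i hi
      rcases Nat.eq_zero_or_pos i with rfl | hpos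
      · left; simp
      · have e1 : i - 1 + 1 = i := by omega
        have h2 := hU (i - 1) (by omega)
        show (π (i-1) ≤ π (i + 1 - 1)) ∨ (π (i + 1 - 1) ≤ π (i - 1))
        have e2 : i + 1 - 1 = i - 1 + 1 := by omega
        rw [e2]
        exact h2
    · show π (0 - 1) ≤ π (1 - 1)
      simp
    · show π (ℓ + 1 - 1) ≤ π (ℓ + 1 - 1 - 1)
      have e1 : ℓ + 1 - 1 = ℓ := by omega
      rw [e1]
      exact hlast
    · intro i hi
      exact hφ (i - 1) (by omega)


theorem cc_sat {V : PL → W → Prop} : ∀ (Φ : SLCS PL) {u v : W}, cc V u v →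
    (sat (· ≤ ·) V Φ u ↔ sat (· ≤ ·) V Φ v) := by
  intro Φ
  induction Φ with
  | ap p => intro u v h; exact cc_atoms h p
  | neg φ ih => intro u v h; exact not_congr (ih h)
  | conj φ ψ ihφ ihψ => intro u v h; exact and_congr (ihφ h) (ihψ h)
  | eta φ ψ ihφ ihψ =>
    have aux : ∀ u v : W, cc V u v →
        sat (· ≤ ·) V (.eta φ ψ) u → sat (· ≤ ·) V (.eta φ ψ) v := by
      intro u v huv hsat
      rw [sat_eta_iff] at hsat ⊢
      obtain ⟨ℓ, π, ⟨hℓ1, hUπ, hlast⟩, h0, hψe, hφi⟩ := hsat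
      obtain ⟨k, σ, hUσ, hσ0, hσk, hag⟩ := cc_symm huv
      have hφu : sat (· ≤ ·) V φ u := by rw [← h0]; exact hφi 0 (by omega)
      have hc : σ k = π 0 := by rw [hσk, h0]
      have hσφ : ∀ j ≤ k, sat (· ≤ ·) V φ (σ j) := by
        intro j hj
        have hccj : cc V v (σ j) := ⟨j, σ, fun i hi => hUσ i (by omega), hσ0, rfl,
          fun i hi j' hj' p => hag i (by omega) j' (by omega) p⟩
        have hcu : cc V (σ j) u := cc_trans (cc_symm hccj) (cc_symm huv)
        exact (ihφ hcu).mpr hφu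
      refine ⟨k + ℓ, pcat σ π k, ⟨by omega, UPath_pcat hUσ hUπ hc, ?_⟩, ?_, ?_, ?_⟩
      · have e : k + ℓ - 1 = k + (ℓ - 1) := by omega
        rw [e, pcat_right hc, pcat_right hc]
        exact hlast
      · rw [pcat_left (Nat.zero_le k), hσ0]
      · rw [pcat_right hc]; exact hψe
      · intro i hi
        rcases le_or_gt i k with h | h
        · rw [pcat_left h]; exact hσφ i h
        · obtain ⟨j, rfl⟩ : ∃ j, i = k + j := ⟨i - k, by omega⟩
          rw [pcat_right hc]
          exact hφi j (by omega)
    intro u v h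
    exact ⟨aux u v h, aux v u (cc_symm h)⟩

section Bisim
variable {S L : Type*} {T : S → L → S → Prop}

theorem sbis_symm {s t : S} (h : SBisimilar T s t) : SBisimilar T t s := by
  obtain ⟨B, hB, hst⟩ := h
  exact ⟨B, hB, hB.1 hst⟩

theorem sbis_forth {s t : S} (h : SBisimilar T s t) {l : L} {s' : S} (hT : T s l s') :
    ∃ t', T t l t' ∧ SBisimilar T s' t' := by
  obtain ⟨B, hB, hst⟩ := h
  obtain ⟨t', hTt, hB'⟩ := (hB.2 s t hst).1 l s' hT
  exact ⟨t', hTt, ⟨B, hB, hB'⟩⟩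

end Bisim

theorem eta_transfer {V : PL → W → Prop} {φ ψ : SLCS PL}
    (ihφ : ∀ u v : W, SBisimilar (aTrans V) (Quot.mk _ u) (Quot.mk _ v) →
      (sat (· ≤ ·) V φ u ↔ sat (· ≤ ·) V φ v))
    (ihψ : ∀ u v : W, SBisimilar (aTrans V) (Quot.mk _ u) (Quot.mk _ v) →
      (sat (· ≤ ·) V ψ u ↔ sat (· ≤ ·) V ψ v)) :
    ∀ (n : ℕ) (π : ℕ → W) (v : W), DPath (· ≤ ·) π n →
      SBisimilar (aTrans V) (Quot.mk _ (π 0)) (Quot.mk _ v) →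
      (∀ i < n, sat (· ≤ ·) V φ (π i)) → sat (· ≤ ·) V ψ (π n) →
      ∃ (m : ℕ) (ρ : ℕ → W), DPath (· ≤ ·) ρ m ∧ ρ 0 = v ∧
        (∀ i < m, sat (· ≤ ·) V φ (ρ i)) ∧ sat (· ≤ ·) V ψ (ρ m) := by
  intro n
  induction n using Nat.strong_induction_on with
  | _ n IH =>
    intro π v hD hbis hφint hψend
    obtain ⟨hn1, hU, hlast⟩ := hD
    have hφ0 : sat (· ≤ ·) V φ (π 0) := hφint 0 (by omega)
    rcases eq_or_lt_of_le hn1 with h1 | h2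
    · -- n = 1 : use a d-transition
      have hn : n = 1 := h1.symm
      subst hn
      have hT : aTrans V (Quot.mk _ (π 0)) ALab.d (Quot.mk _ (π 1)) :=
        ⟨π 0, π 1, rfl, rfl, by simpa using hlast⟩
      obtain ⟨c, hTc, hbis'⟩ := sbis_forth hbis hT
      obtain ⟨x, x', hvx, hcx', hle⟩ := hTc
      subst hcx'
      obtain ⟨k, σ, hUσ, hσ0, hσk, hag⟩ := quot_eq.mp hvx
      have hσφ : ∀ j ≤ k, sat (· ≤ ·) V φ (σ j) := by
        intro j hj
        have hccj : cc V v (σ j) := ⟨j, σ, fun i hi => hUσ i (by omega), hσ0, rfl,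
          fun i hi j' hj' p => hag i (by omega) j' (by omega) p⟩
        have : Quot.mk (cc V) v = Quot.mk (cc V) (σ j) := Quot.sound hccj
        have hb2 : SBisimilar (aTrans V) (Quot.mk (cc V) (π 0)) (Quot.mk (cc V) (σ j)) := by
          rw [← this]; exact hbis
        exact (ihφ _ _ hb2).mp hφ0
      have hψx' : sat (· ≤ ·) V ψ x' := (ihψ _ _ hbis').mp hψend
      refine ⟨k + 1, fun i => if i ≤ k then σ i else x', ⟨by omega, ?_, ?_⟩, ?_, ?_, ?_⟩
      · intro i hi
        rcases lt_or_ge i k with h | h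
        · simp only [if_pos h.le, if_pos (show i + 1 ≤ k by omega)]
          exact hUσ i h
        · have hik : i = k := by omega
          subst hik
          simp only [if_pos le_rfl, if_neg (show ¬ i + 1 ≤ i by omega), hσk]
          exact Or.inr hle
      · simp only [Nat.add_sub_cancel, if_pos le_rfl, if_neg (show ¬ k + 1 ≤ k by omega), hσk]
        exact hle
      · simp only [if_pos (Nat.zero_le k)]; exact hσ0
      · intro i hi
        simp only [if_pos (show i ≤ k by omega)]
        exact hσφ i (by omega)
      · simp only [if_neg (show ¬ k + 1 ≤ k by omega)]
        exact hψx'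
    · -- n ≥ 2 : use an s-transition and recурse on the tail
      have hT : aTrans V (Quot.mk _ (π 0)) ALab.s (Quot.mk _ (π 1)) :=
        ⟨π 0, π 1, rfl, rfl, hU 0 (by omega)⟩
      obtain ⟨c, hTc, hbis'⟩ := sbis_forth hbis hT
      obtain ⟨x, x', hvx, hcx', hcomp⟩ := hTc
      subst hcx'
      obtain ⟨k, σ, hUσ, hσ0, hσk, hag⟩ := quot_eq.mp hvx
      -- tail path
      have e1 : n - 1 + 1 = n := by omega
      have hDτ : DPath (· ≤ ·) (fun i => π (i + 1)) (n - 1) := by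
        refine ⟨by omega, ?_, ?_⟩
        · intro i hi
          exact hU (i + 1) (by omega)
        · show π (n - 1 + 1) ≤ π (n - 1 - 1 + 1)
          rw [e1, show n - 1 - 1 + 1 = n - 1 by omega]
          exact hlast
      have hbτ : SBisimilar (aTrans V) (Quot.mk (cc V) ((fun i => π (i + 1)) 0))
          (Quot.mk (cc V) x') := hbis'
      obtain ⟨m', ρ', hD', hρ'0, hint', hend'⟩ :=
        IH (n - 1) (by omega) (fun i => π (i + 1)) x' hDτ hbτ
          (fun i hi => hφint (i + 1) (by omega))
          (by show sat (· ≤ ·) V ψ (π (n - 1 + 1)); rw [e1]; exact hψend)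
      obtain ⟨hm'1, hU', hlast'⟩ := hD'
      -- σ2 : path of length k+1 from v to x'
      set σ2 : ℕ → W := fun i => if i ≤ k then σ i else x' with hσ2
      have hUσ2 : UPath (· ≤ ·) σ2 (k + 1) := by
        intro i hi
        rcases lt_or_ge i k with h | h
        · simp only [hσ2, if_pos h.le, if_pos (show i + 1 ≤ k by omega)]
          exact hUσ i h
        · have hik : i = k := by omega
          subst hik
          simp only [hσ2, if_pos le_rfl, if_neg (show ¬ i + 1 ≤ i by omega), hσk]
          exact hcomp
      have hc2 : σ2 (k + 1) = ρ' 0 := by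
        simp only [hσ2, if_neg (show ¬ k + 1 ≤ k by omega)]
        exact hρ'0.symm
      have hσφ : ∀ j ≤ k, sat (· ≤ ·) V φ (σ j) := by
        intro j hj
        have hccj : cc V v (σ j) := ⟨j, σ, fun i hi => hUσ i (by omega), hσ0, rfl,
          fun i hi j' hj' p => hag i (by omega) j' (by omega) p⟩
        have heq : Quot.mk (cc V) v = Quot.mk (cc V) (σ j) := Quot.sound hccj
        have hb2 : SBisimilar (aTrans V) (Quot.mk (cc V) (π 0)) (Quot.mk (cc V) (σ j)) := by
          rw [← heq]; exact hbis
        exact (ihφ _ _ hb2).mp hφ0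
      have hφx' : sat (· ≤ ·) V φ x' := by
        rw [← hρ'0]; exact hint' 0 (by omega)
      refine ⟨(k + 1) + m', pcat σ2 ρ' (k + 1),
        ⟨by omega, UPath_pcat hUσ2 hU' hc2, ?_⟩, ?_, ?_, ?_⟩
      · have e : (k + 1) + m' - 1 = (k + 1) + (m' - 1) := by omega
        rw [e, pcat_right hc2, pcat_right hc2]
        exact hlast'
      · rw [pcat_left (Nat.zero_le _)]
        simp only [hσ2, if_pos (Nat.zero_le k)]
        exact hσ0
      · intro i hi
        rcases le_or_gt i (k + 1) with h | h
        · rw [pcat_left h]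
          rcases le_or_gt i k with h' | h'
          · simp only [hσ2, if_pos h']; exact hσφ i h'
          · simp only [hσ2, if_neg (show ¬ i ≤ k by omega)]; exact hφx'
        · obtain ⟨j, rfl⟩ : ∃ j, i = (k + 1) + j := ⟨i - (k + 1), by omega⟩
          rw [pcat_right hc2]
          exact hint' j (by omega)
      · rw [pcat_right hc2]; exact hend'

theorem bisim_sat {V : PL → W → Prop} :
    ∀ (Φ : SLCS PL) (u v : W),
      SBisimilar (aTrans V) (Quot.mk (cc V) u) (Quot.mk (cc V) v) →
      (sat (· ≤ ·) V Φ u ↔ sat (· ≤ ·) V Φ v) := by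
  intro Φ
  induction Φ with
  | ap p =>
    intro u v h
    show V p u ↔ V p v
    have hT : aTrans V (Quot.mk _ u) (ALab.pl {p | V p u}) (Quot.mk _ u) := ⟨u, rfl, rfl, rfl⟩
    obtain ⟨t', hTt, _⟩ := sbis_forth h hT
    obtain ⟨w, hw1, _, hw3⟩ := hTt
    have h1 : V p u ↔ V p w := by
      have := Set.ext_iff.mp hw3 p
      simpa using this
    have h2 : V p v ↔ V p w := cc_atoms (quot_eq.mp hw1) p
    exact h1.trans h2.symm
  | neg φ ih => intro u v h; exact not_congr (ih u v h)
  | conj φ ψ ihφ ihψ => intro u v h; exact and_congr (ihφ u v h) (ihψ u v h)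
  | eta φ ψ ihφ ihψ =>
    intro u v h
    have aux : ∀ u v : W, SBisimilar (aTrans V) (Quot.mk (cc V) u) (Quot.mk (cc V) v) →
        sat (· ≤ ·) V (.eta φ ψ) u → sat (· ≤ ·) V (.eta φ ψ) v := by
      intro u v h hs
      rw [sat_eta_iff] at hs ⊢
      obtain ⟨ℓ, π, hD, h0, hψe, hφi⟩ := hs
      have hb : SBisimilar (aTrans V) (Quot.mk (cc V) (π 0)) (Quot.mk (cc V) v) := by
        rw [h0]; exact h
      obtain ⟨m, ρ, h1, h2, h3, h4⟩ := eta_transfer ihφ ihψ ℓ π v hD hb hφi hψe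
      exact ⟨m, ρ, h1, h2, h4, h3⟩
    exact ⟨aux u v h, aux v u (sbis_symm h)⟩

section Forward
variable [Finite W] {V : PL → W → Prop}

theorem sat_foldr (g : W → SLCS PL) (c : SLCS PL) (l : List W) (t : W) :
    sat (· ≤ ·) V (l.foldr (fun y acc => .conj (g y) acc) c) t ↔
      (sat (· ≤ ·) V c t ∧ ∀ y ∈ l, sat (· ≤ ·) V (g y) t) := by
  induction l with
  | nil => simp
  | cons a l ih =>
    simp only [List.foldr_cons, List.mem_cons]
    show (sat (· ≤ ·) V (g a) t ∧ _) ↔ _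
    rw [ih]
    constructor
    · rintro ⟨h1, h2, h3⟩
      exact ⟨h2, fun y hy => by rcases hy with rfl | hy; exact h1; exact h3 y hy⟩
    · rintro ⟨h1, h2⟩
      exact ⟨h2 a (Or.inl rfl), h1, fun y hy => h2 y (Or.inr hy)⟩

theorem exists_chi (hne : Nonempty (SLCS PL)) (x : W) :
    ∃ χ : SLCS PL, sat (· ≤ ·) V χ x ∧ ∀ z : W, sat (· ≤ ·) V χ z → E V x z := by
  classical
  obtain ⟨φ₀⟩ := hne
  have htop : ∀ z : W, sat (· ≤ ·) V (SLCS.neg (.conj φ₀ (.neg φ₀))) z := by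
    intro z
    show ¬ (sat (· ≤ ·) V φ₀ z ∧ ¬ sat (· ≤ ·) V φ₀ z)
    tauto
  set top : SLCS PL := .neg (.conj φ₀ (.neg φ₀)) with htopdef
  have hδ : ∀ y : W, ∃ δ : SLCS PL,
      ¬ E V x y → sat (· ≤ ·) V δ x ∧ ¬ sat (· ≤ ·) V δ y := by
    intro y
    by_cases hxy : E V x y
    · exact ⟨φ₀, fun h => absurd hxy h⟩
    · obtain ⟨Φ, hΦ⟩ := not_forall.mp hxy
      by_cases hx : sat (· ≤ ·) V Φ x
      · exact ⟨Φ, fun _ => ⟨hx, fun hy => hΦ ⟨fun _ => hy, fun _ => hx⟩⟩⟩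
      · have hy : sat (· ≤ ·) V Φ y := by
          by_contra hy
          exact hΦ ⟨fun h => absurd h hx, fun h => absurd h hy⟩
        refine ⟨.neg Φ, fun _ => ⟨hx, ?_⟩⟩
        show ¬ ¬ sat (· ≤ ·) V Φ y
        exact not_not_intro hy
  choose δ hδ using hδ
  haveI := Fintype.ofFinite W
  set g : W → SLCS PL := fun y => if E V x y then top else δ y with hg
  set l := (Finset.univ : Finset W).toList with hl
  refine ⟨l.foldr (fun y acc => .conj (g y) acc) top, ?_, ?_⟩
  · rw [sat_foldr]
    refine ⟨htop x, fun y _ => ?_⟩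
    by_cases h : E V x y
    · simp only [hg, if_pos h]; exact htop x
    · simp only [hg, if_neg h]; exact (hδ y h).1
  · intro z hz
    by_contra h
    rw [sat_foldr] at hz
    have hmem : z ∈ l := by simp [hl]
    have hzs := hz.2 z hmem
    simp only [hg, if_neg h] at hzs
    exact (hδ z h).2 hzs

theorem lemS {u v w w' : W} (huv : E V u v) (huw : E V u w)
    (hcomp : w ≤ w' ∨ w' ≤ w) :
    ∃ x x' : W, cc V v x ∧ (x ≤ x' ∨ x' ≤ x) ∧ E V x' w' := by
  classical
  rcases isEmpty_or_nonempty (SLCS PL) with he | hne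
  · exact ⟨v, v, cc_refl V v, Or.inl le_rfl, fun Φ => he.elim Φ⟩
  by_cases hdeg : E V w' v
  · exact ⟨v, v, cc_refl V v, Or.inl le_rfl, hdeg.symm⟩
  obtain ⟨χw, hχw1, hχw2⟩ := exists_chi (V := V) hne w
  obtain ⟨χw', hχw'1, hχw'2⟩ := exists_chi (V := V) hne w'
  set Θ : SLCS PL := .eta (.neg (.conj (.neg χw) (.neg χw'))) χw' with hΘdef
  have hΘw : sat (· ≤ ·) V Θ w := by
    rw [hΘdef, sat_eta_iff]
    refine ⟨2, fun i => if i = 0 then w else w', ⟨by omega, ?_, ?_⟩, by simp, ?_, ?_⟩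
    · intro i hi
      interval_cases i
      · simpa using hcomp
      · simp
    · show (if 2 = 0 then w else w') ≤ (if 2 - 1 = 0 then w else w')
      simp
    · show sat (· ≤ ·) V χw' (if 2 = 0 then w else w')
      simpa using hχw'1
    · intro i hi
      interval_cases i
      · show ¬ (¬ sat (· ≤ ·) V χw (if 0 = 0 then w else w') ∧
            ¬ sat (· ≤ ·) V χw' (if 0 = 0 then w else w'))
        simp only [if_pos rfl]
        intro hcon
        exact hcon.1 hχw1
      · show ¬ (¬ sat (· ≤ ·) V χw (if 1 = 0 then w else w') ∧
            ¬ sat (· ≤ ·) V χw' (if 1 = 0 then w else w'))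
        simp only [if_neg (by omega : ¬ (1:ℕ) = 0)]
        intro hcon
        exact hcon.2 hχw'1
  have hΘv : sat (· ≤ ·) V Θ v := (huv Θ).mp ((huw Θ).mpr hΘw)
  rw [hΘdef, sat_eta_iff] at hΘv
  obtain ⟨ℓ, π, ⟨hℓ1, hU, hlast⟩, h0, hend, hint⟩ := hΘv
  have hendE : E V w' (π ℓ) := hχw'2 _ hend
  have hor : ∀ i < ℓ, E V w (π i) ∨ E V w' (π i) := by
    intro i hi
    have hd := hint i hi
    by_cases ha : sat (· ≤ ·) V χw (π i)
    · exact Or.inl (hχw2 _ ha)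
    by_cases hb : sat (· ≤ ·) V χw' (π i)
    · exact Or.inr (hχw'2 _ hb)
    exact absurd ⟨ha, hb⟩ hd
  have hex : ∃ i, E V w' (π i) := ⟨ℓ, hendE⟩
  have hi₀spec : E V w' (π (Nat.find hex)) := Nat.find_spec hex
  have hi₀le : Nat.find hex ≤ ℓ := Nat.find_min' hex hendE
  set i₀ := Nat.find hex with hi₀def
  have hi₀pos : 0 < i₀ := by
    rcases Nat.eq_zero_or_pos i₀ with h | h
    · exfalso
      rw [h, h0] at hi₀spec
      exact hdeg hi₀spec
    · exact h
  have hjw : ∀ j < i₀, E V w (π j) := by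
    intro j hj
    rcases hor j (by omega) with h | h
    · exact h
    · exact absurd h (Nat.find_min hex hj)
  refine ⟨π (i₀ - 1), π i₀, ?_, ?_, hi₀spec.symm⟩
  · refine ⟨i₀ - 1, π, fun i hi => hU i (by omega), h0, rfl, ?_⟩
    intro i hi j hj p
    exact ((hjw i (by omega)).atoms p).symm.trans ((hjw j (by omega)).atoms p)
  · have e : i₀ - 1 + 1 = i₀ := by omega
    have h := hU (i₀ - 1) (by omega)
    rwa [e] at h

theorem lemD {u v w w' : W} (huv : E V u v) (huw : E V u w) (hle : w' ≤ w) :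
    ∃ x x' : W, cc V v x ∧ x' ≤ x ∧ E V x' w' := by
  classical
  rcases isEmpty_or_nonempty (SLCS PL) with he | hne
  · exact ⟨v, v, cc_refl V v, le_rfl, fun Φ => he.elim Φ⟩
  obtain ⟨χw, hχw1, hχw2⟩ := exists_chi (V := V) hne w
  obtain ⟨χw', hχw'1, hχw'2⟩ := exists_chi (V := V) hne w'
  set Θ : SLCS PL := .eta χw χw' with hΘdef
  have hΘw : sat (· ≤ ·) V Θ w := by
    rw [hΘdef, sat_eta_iff]
    refine ⟨1, fun i => if i = 0 then w else w', ⟨le_rfl, ?_, ?_⟩, by simp, ?_, ?_⟩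
    · intro i hi
      interval_cases i
      · right
        simpa using hle
    · show (if 1 = 0 then w else w') ≤ (if 1 - 1 = 0 then w else w')
      simpa using hle
    · show sat (· ≤ ·) V χw' (if 1 = 0 then w else w')
      simpa using hχw'1
    · intro i hi
      interval_cases i
      simpa using hχw1
  have hΘv : sat (· ≤ ·) V Θ v := (huv Θ).mp ((huw Θ).mpr hΘw)
  rw [hΘdef, sat_eta_iff] at hΘv
  obtain ⟨ℓ, π, ⟨hℓ1, hU, hlast⟩, h0, hend, hint⟩ := hΘv
  refine ⟨π (ℓ - 1), π ℓ, ?_, hlast, (hχw'2 _ hend).symm⟩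
  refine ⟨ℓ - 1, π, fun i hi => hU i (by omega), h0, rfl, ?_⟩
  intro i hi j hj p
  have h1 : E V w (π i) := hχw2 _ (hint i (by omega))
  have h2 : E V w (π j) := hχw2 _ (hint j (by omega))
  exact (h1.atoms p).symm.trans (h2.atoms p)

theorem forward {w₁ w₂ : W} (h : E V w₁ w₂) :
    SBisimilar (aTrans V) (Quot.mk (cc V) w₁) (Quot.mk (cc V) w₂) := by
  refine ⟨fun a b => ∃ u v : W, a = Quot.mk _ u ∧ b = Quot.mk _ v ∧ E V u v,
    ⟨?_, ?_⟩, ⟨w₁, w₂, rfl, rfl, h⟩⟩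
  · rintro a b ⟨u, v, h1, h2, h3⟩
    exact ⟨v, u, h2, h1, h3.symm⟩
  · have main : ∀ a b, (∃ u v : W, a = Quot.mk (cc V) u ∧ b = Quot.mk (cc V) v ∧ E V u v) →
        ∀ l a', aTrans V a l a' →
        ∃ b', aTrans V b l b' ∧
          ∃ u v : W, a' = Quot.mk (cc V) u ∧ b' = Quot.mk (cc V) v ∧ E V u v := by
      rintro a b ⟨u, v, rfl, rfl, hE⟩ l a' hT
      cases l with
      | pl α =>
        obtain ⟨w, hw1, hw2, hw3⟩ := hT
        have hEuw : E V u w := fun Φ => cc_sat Φ (quot_eq.mp hw1)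
        have hEwv : E V w v := hEuw.symm.trans hE
        refine ⟨Quot.mk _ v, ⟨v, rfl, rfl, ?_⟩, ⟨w, v, hw2, rfl, hEwv⟩⟩
        rw [hw3]
        ext p
        simpa using (hEwv.atoms p)
      | s =>
        obtain ⟨w, w', hw1, hw2, hcomp⟩ := hT
        have hEuw : E V u w := fun Φ => cc_sat Φ (quot_eq.mp hw1)
        obtain ⟨x, x', hccvx, hcomp', hEx'⟩ := lemS hE hEuw hcomp
        exact ⟨Quot.mk _ x', ⟨x, x', Quot.sound hccvx, rfl, hcomp'⟩,
          ⟨w', x', hw2, rfl, hEx'.symm⟩⟩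
      | d =>
        obtain ⟨w, w', hw1, hw2, hle⟩ := hT
        have hEuw : E V u w := fun Φ => cc_sat Φ (quot_eq.mp hw1)
        obtain ⟨x, x', hccvx, hle', hEx'⟩ := lemD hE hEuw hle
        exact ⟨Quot.mk _ x', ⟨x, x', Quot.sound hccvx, rfl, hle'⟩,
          ⟨w', x', hw2, rfl, hEx'.symm⟩⟩
    intro s t hst
    refine ⟨fun l s' h' => main s t hst l s' h', fun l t' h' => ?_⟩
    obtain ⟨u, v, h1, h2, h3⟩ := hst
    obtain ⟨b', hb', u', v', hb1, hb2, hb3⟩ := main t s ⟨v, u, h2, h1, h3.symm⟩ l t' h'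
    exact ⟨b', hb', v', u', hb2, hb1, hb3.symm⟩

end Forward

end SLCSAux

/-- Theorem: in a finite poset model, two elements are SLCS_η logically equivalent iff
their `⇌`-classes are strongly bisimilar in the abstract LTS `LTS_A(F)`. -/
theorem eqEta_iff_strong_bisim {W PL : Type*} [PartialOrder W] [Finite W]
    (V : PL → W → Prop) (w₁ w₂ : W) :
    (∀ Φ : SLCS PL, sat (· ≤ ·) V Φ w₁ ↔ sat (· ≤ ·) V Φ w₂) ↔
    SBisimilar (aTrans V) (Quot.mk (cc V) w₁) (Quot.mk (cc V) w₂) := by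
  constructor
  · intro h
    exact SLCSAux.forward h
  · intro h Φ
    exact SLCSAux.bisim_sat Φ w₁ w₂ h
end

section
/- Let F = (W,≼,V) be a finite poset model and LTS_C(F) the concrete LTS with states W, labels PL ∪ {τ,c,d}, and transitions: w --p--> w if w ∈ V(p); w --τ--> w' if (w ≼ w' or w' ≼ w) and w,w' satisfy the same proposition letters; w --c--> w' if (w ≼ w' or w' ≼ w) and w,w' do not satisfy the same proposition letters; w --d--> w' if w' ≼ w. Then for all w₁, w₂ ∈ W: [w₁]_⇌ and [w₂]_⇌ are strongly bisimilar in the abstract LTS LTS_A(F) if and only if w₁ and w₂ are branching bisimilar in LTS_C(F). -/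
/-- Labels of the concrete LTS `LTS_C(F)`: proposition letters plus `τ`, `c`, `d`. -/
inductive CLab (PL : Type*) : Type _
  | pl : PL → CLab PL
  | tau : CLab PL
  | c : CLab PL
  | d : CLab PL

/-- Transition relation of the concrete LTS `LTS_C(F)`, whose states are the elements
of `W`. -/
def cTrans {W PL : Type*} [PartialOrder W] (V : PL → W → Prop) :
    W → CLab PL → W → Prop :=
  fun w l w' =>
    match l with
    | .pl p => w' = w ∧ V p w
    | .tau => (w ≤ w' ∨ w' ≤ w) ∧ ∀ p, V p w ↔ V p w'
    | .c => (w ≤ w' ∨ w' ≤ w) ∧ ¬ ∀ p, V p w ↔ V p w'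
    | .d => w' ≤ w

/-- Branching bisimulation for an LTS with transition relation `T` and silent label `tau`. -/
def IsBrBisim {S L : Type*} (T : S → L → S → Prop) (tau : L) (B : S → S → Prop) : Prop :=
  Symmetric B ∧ ∀ s t s' l, B s t → T s l s' →
    (l = tau ∧ B s' t) ∨
    ∃ tb t', Relation.ReflTransGen (fun a b => T a tau b) t tb ∧ T tb l t' ∧
      B s tb ∧ B s' t'

/-- Branching bisimilarity. -/
def BrBisimilar {S L : Type*} (T : S → L → S → Prop) (tau : L) (s t : S) : Prop :=
  ∃ B : S → S → Prop, IsBrBisim T tau B ∧ B s t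

section Aux

open Relation

variable {W PL : Type*} [PartialOrder W] {V : PL → W → Prop}

/-- The silent step relation of the concrete LTS. -/
private abbrev tstep (V : PL → W → Prop) : W → W → Prop :=
  fun a b => cTrans V a CLab.tau b

private lemma cc_refl (w : W) : cc V w w :=
  ⟨0, fun _ => w, fun i hi => absurd hi (Nat.not_lt_zero i), rfl, rfl,
    fun _ _ _ _ _ => Iff.rfl⟩

private lemma step_cc {w w' : W} (h : tstep V w w') : cc V w w' := by
  obtain ⟨hc, hp⟩ := h
  refine ⟨1, fun i => if i = 0 then w else w', ?_, by simp, by simp, ?_⟩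
  · intro i hi
    interval_cases i
    simpa using hc
  · intro i hi j hj p
    interval_cases i <;> interval_cases j <;> simp [hp p]

private lemma cc_snoc {w u v : W} (h : cc V w u) (hs : tstep V u v) : cc V w v := by
  obtain ⟨ℓ, π, hU, h0, hℓ, hP⟩ := h
  obtain ⟨hc, hp⟩ := hs
  refine ⟨ℓ + 1, fun i => if i ≤ ℓ then π i else v, ?_, ?_, ?_, ?_⟩
  · intro i hi
    rcases Nat.lt_or_ge i ℓ with hlt | hge
    · have h1 : i ≤ ℓ := le_of_lt hlt
      have h2 : i + 1 ≤ ℓ := hlt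
      simpa [h1, h2] using hU i hlt
    · have hieq : i = ℓ := le_antisymm (Nat.lt_succ_iff.mp hi) hge
      subst hieq
      simp only [le_refl, if_pos, Nat.not_le.mpr (Nat.lt_succ_self i), if_neg,
        Nat.lt_irrefl, not_false_iff]
      simpa [hℓ] using hc
  · simpa using h0
  · simp
  · have hall : ∀ i ≤ ℓ + 1, ∀ p, V p (if i ≤ ℓ then π i else v) ↔ V p u := by
      intro i hi p
      rcases le_or_gt i ℓ with h1 | h1
      · simpa [h1, hℓ] using hP i h1 ℓ le_rfl p
      · have : ¬ i ≤ ℓ := Nat.not_le.mpr h1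
        simp only [this, if_neg, not_false_iff]
        exact (hp p).symm
    intro i hi j hj p
    exact (hall i hi p).trans (hall j hj p).symm

private lemma cc_rtg {w w' : W} (h : cc V w w') : ReflTransGen (tstep V) w w' := by
  obtain ⟨ℓ, π, hU, h0, hℓ, hP⟩ := h
  subst h0; subst hℓ
  have key : ∀ n ≤ ℓ, ReflTransGen (tstep V) (π 0) (π n) := by
    intro n hn
    induction n with
    | zero => exact ReflTransGen.refl
    | succ m ih =>
      have hm : m ≤ ℓ := Nat.le_of_succ_le hn
      refine (ih hm).tail ⟨hU m hn, fun p => hP m hm (m + 1) hn p⟩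
  exact key ℓ le_rfl

private lemma rtg_cc {w w' : W} (h : ReflTransGen (tstep V) w w') : cc V w w' := by
  induction h with
  | refl => exact cc_refl w
  | tail _ hs ih => exact cc_snoc ih hs

private lemma rtg_symm {w w' : W} (h : ReflTransGen (tstep V) w w') :
    ReflTransGen (tstep V) w' w := by
  induction h with
  | refl => exact ReflTransGen.refl
  | tail _ hs ih =>
    exact (ReflTransGen.single ⟨hs.1.symm, fun p => (hs.2 p).symm⟩).trans ih

private lemma cc_equiv : Equivalence (cc V) :=
  ⟨cc_refl, fun h => rtg_cc (rtg_symm (cc_rtg h)),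
    fun h1 h2 => rtg_cc ((cc_rtg h1).trans (cc_rtg h2))⟩

private lemma quot_eq {a b : W} :
    Quot.mk (cc V) a = Quot.mk (cc V) b ↔ cc V a b := by
  rw [Quot.eq]
  exact cc_equiv.eqvGen_iff

private lemma cc_props {w u : W} (h : cc V w u) (p : PL) : V p w ↔ V p u := by
  obtain ⟨ℓ, π, _, h0, hℓ, hP⟩ := h
  subst h0; subst hℓ
  exact hP 0 (Nat.zero_le _) ℓ le_rfl p

private lemma rtg_props {w u : W} (h : ReflTransGen (tstep V) w u) (p : PL) :
    V p w ↔ V p u := cc_props (rtg_cc h) p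

section Br
variable {B : W → W → Prop} (hB : IsBrBisim (cTrans V) CLab.tau B)
include hB

private lemma br_transfer {w t u : W} (h : B w t)
    (hwu : ReflTransGen (tstep V) w u) :
    ∃ tu, ReflTransGen (tstep V) t tu ∧ B u tu := by
  induction hwu with
  | refl => exact ⟨t, ReflTransGen.refl, h⟩
  | tail _ hs ih =>
    obtain ⟨tu, htu, hBu⟩ := ih
    rcases hB.2 _ _ _ _ hBu hs with ⟨_, hB'⟩ | ⟨tb, t', h1, h2, _, h4⟩
    · exact ⟨tu, htu, hB'⟩
    · exact ⟨t', htu.trans (h1.tail h2), h4⟩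

private lemma br_props_aux {w t : W} (h : B w t) {p : PL} (hp : V p w) : V p t := by
  rcases hB.2 w t w (CLab.pl p) h ⟨rfl, hp⟩ with ⟨heq, _⟩ | ⟨tb, t', h1, h2, _, _⟩
  · exact absurd heq (by simp)
  · exact (rtg_props h1 p).mpr (h2.1 ▸ h2.2)

private lemma br_props {w t : W} (h : B w t) (p : PL) : V p w ↔ V p t :=
  ⟨br_props_aux hB h, br_props_aux hB (hB.1 h)⟩

end Br

section St
variable {B : Quot (cc V) → Quot (cc V) → Prop} (hB : IsSBisim (aTrans V) B)
include hB

private lemma st_props {w t : W} (h : B (Quot.mk (cc V) w) (Quot.mk (cc V) t))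
    (p : PL) : V p w ↔ V p t := by
  have hT : aTrans V (Quot.mk (cc V) w) (ALab.pl {p | V p w}) (Quot.mk (cc V) w) :=
    ⟨w, rfl, rfl, rfl⟩
  obtain ⟨b', hT', _⟩ := ((hB.2 _ _ h).1 _ _ hT)
  obtain ⟨u, htu, _, hset⟩ := hT'
  have h1 : V p w ↔ V p u := Set.ext_iff.mp hset p
  have h2 : V p t ↔ V p u := cc_props (quot_eq.mp htu) p
  exact h1.trans h2.symm

end St

end Aux
/-- Theorem: the `⇌`-classes of `w₁` and `w₂` are strongly bisimilar in the abstract LTS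
`LTS_A(F)` iff `w₁` and `w₂` are branching bisimilar in the concrete LTS `LTS_C(F)`. -/
theorem strong_bisim_iff_branching {W PL : Type*} [PartialOrder W] [Finite W]
    (V : PL → W → Prop) (w₁ w₂ : W) :
    SBisimilar (aTrans V) (Quot.mk (cc V) w₁) (Quot.mk (cc V) w₂) ↔
    BrBisimilar (cTrans V) CLab.tau w₁ w₂ := by
  constructor
  · -- strong bisimilarity in the abstract LTS implies branching bisimilarity
    rintro ⟨B, hB, hwt⟩
    refine ⟨fun w t => B (Quot.mk (cc V) w) (Quot.mk (cc V) t),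
      ⟨fun x y h => hB.1 h, ?_⟩, hwt⟩
    intro s t s' l hst hT
    cases l with
    | pl p =>
      obtain ⟨rfl, hp⟩ := hT
      exact Or.inr ⟨t, t, Relation.ReflTransGen.refl,
        ⟨rfl, (st_props hB hst p).mp hp⟩, hst, hst⟩
    | tau =>
      refine Or.inl ⟨rfl, ?_⟩
      have h1 : Quot.mk (cc V) s' = Quot.mk (cc V) s :=
        quot_eq.mpr (cc_equiv.symm (step_cc hT))
      show B (Quot.mk (cc V) s') (Quot.mk (cc V) t)
      rw [h1]; exact hst
    | c =>
      obtain ⟨hc, hnp⟩ := hT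
      have hTa : aTrans V (Quot.mk (cc V) s) ALab.s (Quot.mk (cc V) s') :=
        ⟨s, s', rfl, rfl, hc⟩
      obtain ⟨b', hT', hB'⟩ := (hB.2 _ _ hst).1 _ _ hTa
      obtain ⟨u, u', htu, rfl, hcomp⟩ := hT'
      have hdiff : ¬ ∀ p, V p u ↔ V p u' := by
        intro hsame
        have h2 : Quot.mk (cc V) u' = Quot.mk (cc V) t := by
          rw [htu]
          exact quot_eq.mpr (cc_equiv.symm (step_cc ⟨hcomp, hsame⟩))
        rw [h2] at hB'
        exact hnp fun p => (st_props hB hst p).trans (st_props hB hB' p).symm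
      refine Or.inr ⟨u, u', cc_rtg (quot_eq.mp htu), ⟨hcomp, hdiff⟩, ?_, hB'⟩
      show B (Quot.mk (cc V) s) (Quot.mk (cc V) u)
      rw [← htu]; exact hst
    | d =>
      have hTa : aTrans V (Quot.mk (cc V) s) ALab.d (Quot.mk (cc V) s') :=
        ⟨s, s', rfl, rfl, hT⟩
      obtain ⟨b', hT', hB'⟩ := (hB.2 _ _ hst).1 _ _ hTa
      obtain ⟨u, u', htu, rfl, hle⟩ := hT'
      refine Or.inr ⟨u, u', cc_rtg (quot_eq.mp htu), hle, ?_, hB'⟩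
      show B (Quot.mk (cc V) s) (Quot.mk (cc V) u)
      rw [← htu]; exact hst
  · -- branching bisimilarity implies strong bisimilarity in the abstract LTS
    rintro ⟨B, hB, hwt⟩
    set Bh : Quot (cc V) → Quot (cc V) → Prop :=
      fun a b => ∃ w t, a = Quot.mk (cc V) w ∧ b = Quot.mk (cc V) t ∧ B w t with hBh
    have hsymm : Symmetric Bh := by
      rintro a b ⟨w, t, rfl, rfl, h⟩; exact ⟨t, w, rfl, rfl, hB.1 h⟩
    have bullet : ∀ a b, Bh a b → ∀ l a', aTrans V a l a' →
        ∃ b', aTrans V b l b' ∧ Bh a' b' := by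
      rintro a b ⟨w, t, rfl, rfl, hwt'⟩ l a' hT
      cases l with
      | pl α =>
        obtain ⟨u, hau, rfl, rfl⟩ := hT
        have hprops : ∀ p, V p u ↔ V p t := fun p =>
          (cc_props (quot_eq.mp hau) p).symm.trans (br_props hB hwt' p)
        refine ⟨Quot.mk (cc V) t, ⟨t, rfl, rfl, ?_⟩, ?_⟩
        · ext p; exact hprops p
        · rw [← hau]; exact ⟨w, t, rfl, rfl, hwt'⟩
      | s =>
        obtain ⟨u, u', hau, rfl, hcomp⟩ := hT
        by_cases hsame : ∀ p, V p u ↔ V p u'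
        · have h1 : Quot.mk (cc V) u' = Quot.mk (cc V) u :=
            quot_eq.mpr (cc_equiv.symm (step_cc ⟨hcomp, hsame⟩))
          refine ⟨Quot.mk (cc V) t, ⟨t, t, rfl, rfl, Or.inl le_rfl⟩, ?_⟩
          rw [h1, ← hau]; exact ⟨w, t, rfl, rfl, hwt'⟩
        · obtain ⟨tu, htu, hBu⟩ := br_transfer hB hwt' (cc_rtg (quot_eq.mp hau))
          rcases hB.2 u tu u' CLab.c hBu ⟨hcomp, hsame⟩ with
            ⟨heq, _⟩ | ⟨tb, t', h1, h2, _, h4⟩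
          · exact absurd heq (by simp)
          · exact ⟨Quot.mk (cc V) t',
              ⟨tb, t', quot_eq.mpr (rtg_cc (htu.trans h1)), rfl, h2.1⟩,
              ⟨u', t', rfl, rfl, h4⟩⟩
      | d =>
        obtain ⟨u, u', hau, rfl, hle⟩ := hT
        obtain ⟨tu, htu, hBu⟩ := br_transfer hB hwt' (cc_rtg (quot_eq.mp hau))
        rcases hB.2 u tu u' CLab.d hBu hle with
          ⟨heq, _⟩ | ⟨tb, t', h1, h2, _, h4⟩
        · exact absurd heq (by simp)
        · exact ⟨Quot.mk (cc V) t',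
            ⟨tb, t', quot_eq.mpr (rtg_cc (htu.trans h1)), rfl, h2⟩,
            ⟨u', t', rfl, rfl, h4⟩⟩
    refine ⟨Bh, ⟨hsymm, fun s t hst => ⟨bullet s t hst, fun l t' hT => ?_⟩⟩,
      ⟨w₁, w₂, rfl, rfl, hwt⟩⟩
    obtain ⟨s', h1, h2⟩ := bullet t s (hsymm hst) l t' hT
    exact ⟨s', h1, hsymm h2⟩
end

section
/- Let F = (W,≼,V) be a finite poset model. For all w₁, w₂ ∈ W: w₁ ≡_η w₂ (they satisfy the same SLCS_η formulas in F) if and only if w₁ and w₂ are branching bisimilar as states of the concrete LTS LTS_C(F). -/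
namespace EtaBranch

open Relation

variable {W PL : Type*} [PartialOrder W] (V : PL → W → Prop)

def Cmp (a b : W) : Prop := a ≤ b ∨ b ≤ a

def eqv (a b : W) : Prop := ∀ Φ : SLCS PL, sat (· ≤ ·) V Φ a ↔ sat (· ≤ ·) V Φ b

lemma eqv_refl (a : W) : eqv V a a := fun _ => Iff.rfl
lemma eqv_symm {a b : W} (h : eqv V a b) : eqv V b a := fun Φ => (h Φ).symm
lemma eqv_trans {a b c : W} (h1 : eqv V a b) (h2 : eqv V b c) : eqv V a c :=
  fun Φ => (h1 Φ).trans (h2 Φ)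

lemma val_of_eqv {a b : W} (h : eqv V a b) (p : PL) : V p a ↔ V p b := h (.ap p)

abbrev Tau (a b : W) : Prop := cTrans V a CLab.tau b

lemma tau_refl (a : W) : Tau V a a := ⟨Or.inl le_rfl, fun _ => Iff.rfl⟩
lemma tau_symm {a b : W} (h : Tau V a b) : Tau V b a := ⟨h.1.symm, fun p => (h.2 p).symm⟩

lemma rtg_tau_symm {a b : W} (h : ReflTransGen (Tau V) a b) : ReflTransGen (Tau V) b a := by
  induction h with
  | refl => exact .refl
  | tail _ h2 ih => exact .head (tau_symm V h2) ih

lemma rtg_tau_val {a b : W} (h : ReflTransGen (Tau V) a b) (p : PL) : V p a ↔ V p b := by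
  induction h with
  | refl => exact Iff.rfl
  | tail _ h2 ih => exact ih.trans (h2.2 p)

def bb (a b : W) : Prop := BrBisimilar (cTrans V) CLab.tau a b

lemma bb_symm {a b : W} (h : bb V a b) : bb V b a :=
  let ⟨B, hB, hab⟩ := h; ⟨B, hB, hB.1 hab⟩

lemma bb_step {s t s' : W} {l : CLab PL} (h : bb V s t) (hT : cTrans V s l s') :
    (l = CLab.tau ∧ bb V s' t) ∨
    ∃ tb t', ReflTransGen (Tau V) t tb ∧ cTrans V tb l t' ∧ bb V s tb ∧ bb V s' t' := by
  obtain ⟨B, hB, hst⟩ := h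
  rcases hB.2 s t s' l hst hT with ⟨hl, h'⟩ | ⟨tb, t', h1, h2, h3, h4⟩
  · exact Or.inl ⟨hl, B, hB, h'⟩
  · exact Or.inr ⟨tb, t', h1, h2, ⟨B, hB, h3⟩, ⟨B, hB, h4⟩⟩

lemma bb_rtg_transfer {r s r' : W} (h : bb V r s) (hr : ReflTransGen (Tau V) r r') :
    ∃ s', ReflTransGen (Tau V) s s' ∧ bb V r' s' := by
  induction hr with
  | refl => exact ⟨s, .refl, h⟩
  | tail _ h2 ih =>
    obtain ⟨sm, hs, hbm⟩ := ih
    rcases bb_step V hbm h2 with ⟨_, hb'⟩ | ⟨tb, t', h3, h4, _, h6⟩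
    · exact ⟨sm, hs, hb'⟩
    · exact ⟨t', (hs.trans h3).tail h4, h6⟩

lemma stutter {a v u : W} (h1 : bb V a v) (h2 : ReflTransGen (Tau V) u v) : bb V a u := by
  refine ⟨fun x y => (∃ w, bb V x w ∧ ReflTransGen (Tau V) y w) ∨
      (∃ w, bb V y w ∧ ReflTransGen (Tau V) x w), ⟨?_, ?_⟩, Or.inl ⟨v, h1, h2⟩⟩
  · intro x y h
    rcases h with ⟨w, h⟩ | ⟨w, h⟩
    · exact Or.inr ⟨w, h⟩
    · exact Or.inl ⟨w, h⟩
  · intro s t s' l hB hT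
    rcases hB with ⟨w, hbsw, htw⟩ | ⟨w, hbtw, hsw⟩
    · rcases bb_step V hbsw hT with ⟨hl, hb'⟩ | ⟨vb, v₁, hrtg, hstep, hb1, hb2⟩
      · exact Or.inl ⟨hl, Or.inl ⟨w, hb', htw⟩⟩
      · exact Or.inr ⟨vb, v₁, htw.trans hrtg, hstep, Or.inl ⟨vb, hb1, .refl⟩,
          Or.inl ⟨v₁, hb2, .refl⟩⟩
    · obtain ⟨t1, htt1, hbst1⟩ := bb_rtg_transfer V (bb_symm V hbtw) (rtg_tau_symm V hsw)
      rcases bb_step V hbst1 hT with ⟨hl, hb'⟩ | ⟨tb, t', hrtg, hstep, hb1, hb2⟩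
      · subst hl
        exact Or.inr ⟨t1, t1, htt1, tau_refl V t1, Or.inl ⟨t1, hbst1, .refl⟩,
          Or.inl ⟨t1, hb', .refl⟩⟩
      · exact Or.inr ⟨tb, t', htt1.trans hrtg, hstep, Or.inl ⟨tb, hb1, .refl⟩,
          Or.inl ⟨t', hb2, .refl⟩⟩


omit [PartialOrder W] in
lemma path_rtg {R : W → W → Prop} (π : ℕ → W) :
    ∀ n, (∀ i < n, R (π i) (π (i + 1))) → ReflTransGen R (π 0) (π n) := by
  intro n
  induction n with
  | zero => intro _; exact .refl
  | succ n ih => intro h; exact (ih (fun i hi => h i (by omega))).tail (h n (by omega))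

lemma sat_eta_iff (φ ψ : SLCS PL) (w : W) :
    sat (· ≤ ·) V (.eta φ ψ) w ↔
      sat (· ≤ ·) V φ w ∧ ∃ v' v : W,
        ReflTransGen (fun a b => Cmp a b ∧ sat (· ≤ ·) V φ b) w v' ∧
        v ≤ v' ∧ sat (· ≤ ·) V ψ v := by
  constructor
  · rintro ⟨ℓ, π, ⟨h2, hU, h01, hdown⟩, hw, hψ, hφ⟩
    subst hw
    refine ⟨hφ 0 (by omega), π (ℓ - 1), π ℓ, ?_, hdown, hψ⟩
    have key : ∀ i ≤ ℓ - 1, ReflTransGen (fun a b => Cmp a b ∧ sat (· ≤ ·) V φ b) (π 0) (π i) := by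
      intro i
      induction i with
      | zero => intro _; exact .refl
      | succ n ih =>
        intro h
        exact (ih (by omega)).tail ⟨hU n (by omega), hφ (n + 1) (by omega)⟩
    exact key (ℓ - 1) le_rfl
  · rintro ⟨hφw, v', v, hch, hle, hψ⟩
    have key : ∀ a, ReflTransGen (fun a b => Cmp a b ∧ sat (· ≤ ·) V φ b) a v' →
        sat (· ≤ ·) V φ a → ∃ (k : ℕ) (π : ℕ → W), π 0 = a ∧ π k = v' ∧
          (∀ i < k, Cmp (π i) (π (i + 1))) ∧ (∀ i ≤ k, sat (· ≤ ·) V φ (π i)) := by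
      intro a h
      induction h using Relation.ReflTransGen.head_induction_on with
      | refl =>
        intro hφ
        exact ⟨0, fun _ => v', rfl, rfl, fun i hi => by omega, fun i _ => hφ⟩
      | @head a c hac hcb ih =>
        intro hφa
        obtain ⟨k, π, h0, hk, hC, hF⟩ := ih hac.2
        refine ⟨k + 1, fun n => match n with | 0 => a | (i + 1) => π i, rfl, hk, ?_, ?_⟩
        · intro i hi
          match i with
          | 0 =>
            show Cmp a (π 0)
            rw [h0]; exact hac.1
          | (j + 1) => exact hC j (by omega)
        · intro i hi
          match i with
          | 0 => exact hφa
          | (j + 1) => exact hF j (by omega)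
    obtain ⟨k, π, h0, hk, hC, hF⟩ := key w hch hφw
    refine ⟨k + 2, fun n => match n with | 0 => w | (i + 1) => if i ≤ k then π i else v,
      ⟨by omega, ?_, ?_, ?_⟩, rfl, ?_, ?_⟩
    · intro i hi
      match i with
      | 0 =>
        simp only [Nat.zero_le, if_pos]
        exact Or.inl (le_of_eq h0.symm)
      | (j + 1) =>
        by_cases hj : j + 1 ≤ k
        · simp only [if_pos (by omega : j ≤ k), if_pos hj]
          exact hC j (by omega)
        · have hjk : j = k := by omega
          subst hjk
          simp only [if_pos (le_refl j), if_neg hj]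
          exact Or.inr (hk ▸ hle)
    · simp only [Nat.zero_le, if_pos]
      exact le_of_eq h0.symm
    · show (if k + 1 ≤ k then π (k + 1) else v) ≤ _
      have : k + 2 - 1 = k + 1 := by omega
      rw [this]
      simp only [if_neg (by omega : ¬ k + 1 ≤ k), if_pos (le_refl k)]
      exact hk ▸ hle
    · show sat _ V ψ (if k + 1 ≤ k then π (k + 1) else v)
      simp only [if_neg (by omega : ¬ k + 1 ≤ k)]
      exact hψ
    · intro i hi
      match i with
      | 0 => exact hφw
      | (j + 1) =>
        simp only [if_pos (by omega : j ≤ k)]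
        exact hF j (by omega)


lemma sat_foldr (L : List (SLCS PL)) (b : SLCS PL) (x : W) :
    sat (· ≤ ·) V (L.foldr .conj b) x ↔
      (∀ θ ∈ L, sat (· ≤ ·) V θ x) ∧ sat (· ≤ ·) V b x := by
  induction L with
  | nil => simp
  | cons hd tl ih => simp [sat, ih, and_assoc]

lemma exists_char [Finite W] (u : W) (h : ∃ v, ¬ eqv V u v) :
    ∃ χ : SLCS PL, ∀ x, sat (· ≤ ·) V χ x ↔ eqv V u x := by
  classical
  obtain ⟨v₀, hv₀⟩ := h
  have hd : ∀ v : W, ¬ eqv V u v → ∃ δ : SLCS PL,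
      sat (· ≤ ·) V δ u ∧ ¬ sat (· ≤ ·) V δ v := by
    intro v hv
    unfold eqv at hv
    obtain ⟨Φ, hΦ⟩ := not_forall.1 hv
    by_cases h1 : sat (· ≤ ·) V Φ u
    · exact ⟨Φ, h1, fun h2 => hΦ (iff_of_true h1 h2)⟩
    · have h2 : sat (· ≤ ·) V Φ v := by
        by_contra h3
        exact hΦ (iff_of_false h1 h3)
      exact ⟨.neg Φ, h1, fun h4 => h4 h2⟩
  have hd' : ∀ v : W, ∃ δ : SLCS PL,
      sat (· ≤ ·) V δ u ∧ (¬ eqv V u v → ¬ sat (· ≤ ·) V δ v) := by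
    intro v
    by_cases hv : eqv V u v
    · obtain ⟨δ₀, h1, _⟩ := hd v₀ hv₀
      exact ⟨δ₀, h1, fun h => absurd hv h⟩
    · obtain ⟨δ, h1, h2⟩ := hd v hv
      exact ⟨δ, h1, fun _ => h2⟩
  choose δ hδu hδv using hd'
  obtain ⟨l, hl⟩ : ∃ l : List W, ∀ x : W, x ∈ l := by
    have : Fintype W := Fintype.ofFinite W
    exact ⟨Finset.univ.toList, fun x => Finset.mem_toList.2 (Finset.mem_univ x)⟩
  refine ⟨(l.map δ).foldr .conj (δ v₀), fun x => ⟨?_, ?_⟩⟩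
  · intro hx
    by_contra hne
    have hmem : δ x ∈ l.map δ := List.mem_map_of_mem (hl x)
    have : sat (· ≤ ·) V (δ x) x := ((sat_foldr V _ _ _).1 hx).1 (δ x) hmem
    exact hδv x hne this
  · intro he
    refine (sat_foldr V _ _ _).2 ⟨?_, (he (δ v₀)).1 (hδu v₀)⟩
    intro θ hθ
    obtain ⟨v, _, rfl⟩ := List.mem_map.1 hθ
    exact (he (δ v)).1 (hδu v)

lemma chain_tau {s : W} (π : ℕ → W) (m : ℕ)
    (hC : ∀ i < m, Cmp (π i) (π (i + 1)))
    (hs : ∀ i ≤ m, eqv V s (π i)) :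
    ReflTransGen (Tau V) (π 0) (π m) :=
  path_rtg π m (fun i hi => ⟨hC i hi, fun p =>
    (val_of_eqv V (hs i (by omega)) p).symm.trans (val_of_eqv V (hs (i + 1) (by omega)) p)⟩)

lemma extract_cmp [Finite W] {s t s' : W} (hst : eqv V s t) (hcmp : Cmp s s')
    (hne : ¬ eqv V s s') :
    ∃ tb t', ReflTransGen (Tau V) t tb ∧ Cmp tb t' ∧ eqv V s tb ∧ eqv V s' t' := by
  classical
  obtain ⟨χ₁, hχ₁⟩ := exists_char V s ⟨s', hne⟩
  obtain ⟨χ₂, hχ₂⟩ := exists_char V s' ⟨s, fun h => hne (eqv_symm V h)⟩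
  have hor : ∀ x, sat (· ≤ ·) V (.neg (.conj (.neg χ₁) (.neg χ₂))) x ↔
      (eqv V s x ∨ eqv V s' x) := by
    intro x
    simp only [sat]
    rw [hχ₁ x, hχ₂ x]
    exact or_iff_not_and_not.symm
  set Φ : SLCS PL := .eta (.neg (.conj (.neg χ₁) (.neg χ₂))) χ₂ with hΦdef
  have hsatl : sat (· ≤ ·) V Φ s := by
    rcases hcmp with hup | hdn
    · refine ⟨3, fun n => match n with | 0 => s | 1 => s | _ => s',
        ⟨by omega, ?_, le_rfl, le_rfl⟩, rfl, ?_, ?_⟩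
      · intro i hi
        match i with
        | 0 => exact Or.inl le_rfl
        | 1 => exact Or.inl hup
        | 2 => exact Or.inl le_rfl
      · exact (hχ₂ s').2 (eqv_refl V s')
      · intro i hi
        match i with
        | 0 => exact (hor s).2 (Or.inl (eqv_refl V s))
        | 1 => exact (hor s).2 (Or.inl (eqv_refl V s))
        | 2 => exact (hor s').2 (Or.inr (eqv_refl V s'))
    · refine ⟨2, fun n => match n with | 0 => s | 1 => s | _ => s',
        ⟨by omega, ?_, le_rfl, hdn⟩, rfl, ?_, ?_⟩
      · intro i hi
        match i with
        | 0 => exact Or.inl le_rfl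
        | 1 => exact Or.inr hdn
      · exact (hχ₂ s').2 (eqv_refl V s')
      · intro i hi
        match i with
        | 0 => exact (hor s).2 (Or.inl (eqv_refl V s))
        | 1 => exact (hor s).2 (Or.inl (eqv_refl V s))
  have hsatr := (hst Φ).1 hsatl
  obtain ⟨ℓ, π, ⟨hl2, hU, h01, hdn'⟩, hπ0, hψ, hφ⟩ := hsatr
  have hex : ∃ j, sat (· ≤ ·) V χ₂ (π j) := ⟨ℓ, hψ⟩
  have hPj := Nat.find_spec hex
  have hjle : Nat.find hex ≤ ℓ := Nat.find_min' hex hψ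
  have hj0 : Nat.find hex ≠ 0 := by
    intro h0
    have h1 : sat (· ≤ ·) V χ₂ (π 0) := h0 ▸ hPj
    rw [hπ0] at h1
    exact hne (eqv_trans V hst (eqv_symm V ((hχ₂ t).1 h1)))
  obtain ⟨j', hj'⟩ : ∃ j', Nat.find hex = j' + 1 := ⟨Nat.find hex - 1, by omega⟩
  have hmin : ∀ i < Nat.find hex, ¬ sat (· ≤ ·) V χ₂ (π i) :=
    fun i hi => Nat.find_min hex hi
  have hsi : ∀ i ≤ j', eqv V s (π i) := by
    intro i hi
    rcases (hor (π i)).1 (hφ i (by omega)) with h | h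
    · exact h
    · exact absurd ((hχ₂ (π i)).2 h) (hmin i (by omega))
  have hchain := chain_tau V π j' (fun i hi => hU i (by omega)) hsi
  rw [hπ0] at hchain
  refine ⟨π j', π (j' + 1), hchain, hU j' (by omega), hsi j' le_rfl, ?_⟩
  exact (hχ₂ _).1 (hj' ▸ hPj)

lemma extract_down [Finite W] {s t s' : W} (hst : eqv V s t) (hdn : s' ≤ s)
    (hne : ¬ eqv V s s') :
    ∃ tb t', ReflTransGen (Tau V) t tb ∧ t' ≤ tb ∧ eqv V s tb ∧ eqv V s' t' := by
  classical
  obtain ⟨χ₁, hχ₁⟩ := exists_char V s ⟨s', hne⟩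
  obtain ⟨χ₂, hχ₂⟩ := exists_char V s' ⟨s, fun h => hne (eqv_symm V h)⟩
  set Φ : SLCS PL := .eta χ₁ χ₂ with hΦdef
  have hsatl : sat (· ≤ ·) V Φ s := by
    refine ⟨2, fun n => match n with | 0 => s | 1 => s | _ => s',
      ⟨by omega, ?_, le_rfl, hdn⟩, rfl, ?_, ?_⟩
    · intro i hi
      match i with
      | 0 => exact Or.inl le_rfl
      | 1 => exact Or.inr hdn
    · exact (hχ₂ s').2 (eqv_refl V s')
    · intro i hi
      match i with
      | 0 => exact (hχ₁ s).2 (eqv_refl V s)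
      | 1 => exact (hχ₁ s).2 (eqv_refl V s)
  have hsatr := (hst Φ).1 hsatl
  obtain ⟨ℓ, π, ⟨hl2, hU, h01, hdn'⟩, hπ0, hψ, hφ⟩ := hsatr
  obtain ⟨m, rfl⟩ : ∃ m, ℓ = m + 1 := ⟨ℓ - 1, by omega⟩
  have hsi : ∀ i ≤ m, eqv V s (π i) := fun i hi => (hχ₁ _).1 (hφ i (by omega))
  have hchain := chain_tau V π m (fun i hi => hU i (by omega)) hsi
  rw [hπ0] at hchain
  refine ⟨π m, π (m + 1), hchain, ?_, hsi m le_rfl, (hχ₂ _).1 hψ⟩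
  simpa using hdn'

theorem eqv_isbisim [Finite W] : IsBrBisim (cTrans V) CLab.tau (eqv V (PL := PL)) := by
  constructor
  · intro a b h
    exact eqv_symm V h
  · intro s t s' l hst hT
    cases l with
    | pl p =>
      obtain ⟨rfl, hp⟩ := hT
      exact Or.inr ⟨t, t, .refl, ⟨rfl, (val_of_eqv V hst p).1 hp⟩, hst, hst⟩
    | tau =>
      obtain ⟨hcmp, hval⟩ := hT
      by_cases h' : eqv V s' t
      · exact Or.inl ⟨rfl, h'⟩
      · have hne : ¬ eqv V s s' := fun h => h' (eqv_trans V (eqv_symm V h) hst)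
        obtain ⟨tb, t', h1, h2, h3, h4⟩ := extract_cmp V hst hcmp hne
        refine Or.inr ⟨tb, t', h1, ⟨h2, fun p => ?_⟩, h3, h4⟩
        exact (val_of_eqv V h3 p).symm.trans ((hval p).trans (val_of_eqv V h4 p))
    | c =>
      obtain ⟨hcmp, hnval⟩ := hT
      have hne : ¬ eqv V s s' := fun h => hnval (fun p => val_of_eqv V h p)
      obtain ⟨tb, t', h1, h2, h3, h4⟩ := extract_cmp V hst hcmp hne
      refine Or.inr ⟨tb, t', h1, ⟨h2, fun hall => hnval (fun p => ?_)⟩, h3, h4⟩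
      exact (val_of_eqv V h3 p).trans ((hall p).trans (val_of_eqv V h4 p).symm)
    | d =>
      have hdn : s' ≤ s := hT
      by_cases h' : eqv V s s'
      · exact Or.inr ⟨t, t, .refl, le_rfl, hst, eqv_trans V (eqv_symm V h') hst⟩
      · obtain ⟨tb, t', h1, h2, h3, h4⟩ := extract_down V hst hdn h'
        exact Or.inr ⟨tb, t', h1, h2, h3, h4⟩


theorem bb_sat (Φ : SLCS PL) :
    ∀ s t : W, bb V s t → (sat (· ≤ ·) V Φ s ↔ sat (· ≤ ·) V Φ t) := by
  induction Φ with
  | ap p =>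
    have key : ∀ s t : W, bb V s t → V p s → V p t := by
      intro s t hb hs
      rcases bb_step V hb (show cTrans V s (.pl p) s from ⟨rfl, hs⟩) with
        ⟨hl, _⟩ | ⟨tb, t', hrtg, hstep, _, _⟩
      · exact nomatch hl
      · exact (rtg_tau_val V hrtg p).2 hstep.2
    intro s t hb
    exact ⟨key s t hb, key t s (bb_symm V hb)⟩
  | neg φ ih =>
    intro s t hb
    simp only [sat]
    rw [ih s t hb]
  | conj φ ψ ihφ ihψ =>
    intro s t hb
    simp only [sat]
    rw [ihφ s t hb, ihψ s t hb]
  | eta φ ψ ihφ ihψ =>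
    have key : ∀ s t : W, bb V s t →
        sat (· ≤ ·) V (.eta φ ψ) s → sat (· ≤ ·) V (.eta φ ψ) t := by
      intro s t hb hs
      rw [sat_eta_iff] at hs ⊢
      obtain ⟨hφs, v', v, hch, hle, hψv⟩ := hs
      set Rel : W → W → Prop := fun a b => Cmp a b ∧ sat (· ≤ ·) V φ b with hRel
      have tauRel : ∀ {a u ub : W}, ReflTransGen (Tau V) u ub → bb V a ub →
          sat (· ≤ ·) V φ a → ReflTransGen Rel u ub := by
        intro a u ub h
        induction h with
        | refl => intro _ _; exact .refl
        | @tail m e hum hstep ih =>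
          intro hbb hφa
          have hbam : bb V a m := stutter V hbb (ReflTransGen.single hstep)
          exact (ih hbam hφa).tail ⟨hstep.1, (ihφ a e hbb).1 hφa⟩
      have main : ∀ a, ReflTransGen Rel a v' → ∀ u, sat (· ≤ ·) V φ a → bb V a u →
          ∃ u', ReflTransGen Rel u u' ∧ bb V v' u' := by
        intro a h
        induction h using Relation.ReflTransGen.head_induction_on with
        | refl => intro u _ hbb; exact ⟨u, .refl, hbb⟩
        | @head a c hac hcv ih =>
          intro u hφa hbau
          rcases Classical.em (∀ p, V p a ↔ V p c) with hval | hval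
          · rcases bb_step V hbau (show cTrans V a .tau c from ⟨hac.1, hval⟩) with
              ⟨_, hbcu⟩ | ⟨ub, u₁, hrtg, hstep, hb1, hb2⟩
            · exact ih u hac.2 hbcu
            · obtain ⟨u', h3, h4⟩ := ih u₁ hac.2 hb2
              exact ⟨u', ((tauRel hrtg hb1 hφa).tail
                ⟨hstep.1, (ihφ c u₁ hb2).1 hac.2⟩).trans h3, h4⟩
          · rcases bb_step V hbau (show cTrans V a .c c from ⟨hac.1, hval⟩) with
              ⟨hl, _⟩ | ⟨ub, u₁, hrtg, hstep, hb1, hb2⟩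
            · exact nomatch hl
            · obtain ⟨u', h3, h4⟩ := ih u₁ hac.2 hb2
              exact ⟨u', ((tauRel hrtg hb1 hφa).tail
                ⟨hstep.1, (ihφ c u₁ hb2).1 hac.2⟩).trans h3, h4⟩
      obtain ⟨u', hchain, hbv'⟩ := main s hch t hφs hb
      have hφv' : sat (· ≤ ·) V φ v' := by
        have aux : ∀ a b : W, ReflTransGen Rel a b →
            sat (· ≤ ·) V φ a → sat (· ≤ ·) V φ b := by
          intro a b h
          induction h with
          | refl => exact id
          | tail _ h2 _ => intro _; exact h2.2
        exact aux s v' hch hφs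
      rcases bb_step V hbv' (show cTrans V v' .d v from hle) with
        ⟨hl, _⟩ | ⟨ub, u₂, hrtg, hstep, hb1, hb2⟩
      · exact nomatch hl
      · exact ⟨(ihφ s t hb).1 hφs, ub, u₂, hchain.trans (tauRel hrtg hb1 hφv'),
          hstep, (ihψ v u₂ hb2).1 hψv⟩
    intro s t hb
    exact ⟨key s t hb, key t s (bb_symm V hb)⟩

end EtaBranch

/-- Corollary: in a finite poset model, two elements satisfy the same SLCS_η formulas
iff they are branching bisimilar as states of the concrete LTS `LTS_C(F)`. -/


theorem eqEta_iff_branching {W PL : Type*} [PartialOrder W] [Finite W]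
    (V : PL → W → Prop) (w₁ w₂ : W) :
    (∀ Φ : SLCS PL, sat (· ≤ ·) V Φ w₁ ↔ sat (· ≤ ·) V Φ w₂) ↔
    BrBisimilar (cTrans V) CLab.tau w₁ w₂ := by
  constructor
  · intro h
    exact ⟨EtaBranch.eqv V, EtaBranch.eqv_isbisim V, h⟩
  · intro h Φ
    exact EtaBranch.bb_sat V Φ w₁ w₂ h
end

section
/- Let F = (W,≼,V) be a finite poset model and F_min = (W_min, R_min, V_min) its quotient Kripke model modulo ≡_η, where W_min = W/≡_η, R_min([w₁],[w₂]) iff w₁' ≼ w₂' for some w₁' ≡_η w₁ and w₂' ≡_η w₂, and [w] ∈ V_min(p) iff w' ∈ V(p) for some w' ≡_η w. Then for each w ∈ W and SLCS_η formula Φ: F,w ⊨ Φ if and only if F_min,[w]_{≡_η} ⊨ Φ (with η interpreted via ±-paths over the relation R_min in F_min). -/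
/-- Accessibility relation of the quotient (minimal) Kripke model `F_min`:
`R_min([w₁],[w₂])` iff `w₁' ≤ w₂'` for some representatives `w₁' ≡_η w₁`, `w₂' ≡_η w₂`. -/
def Rmin {W PL : Type*} [PartialOrder W] (V : PL → W → Prop) :
    Quot (eqEta V) → Quot (eqEta V) → Prop :=
  fun a b => ∃ w₁ w₂ : W, a = Quot.mk _ w₁ ∧ b = Quot.mk _ w₂ ∧ w₁ ≤ w₂

/-- Valuation of the quotient (minimal) Kripke model `F_min`. -/
def Vmin {W PL : Type*} [PartialOrder W] (V : PL → W → Prop) :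
    PL → Quot (eqEta V) → Prop :=
  fun p a => ∃ w : W, a = Quot.mk _ w ∧ V p w

theorem eqEta_equiv {W PL : Type*} [PartialOrder W] (V : PL → W → Prop) :
    Equivalence (eqEta (PL := PL) V) :=
  ⟨fun _ _ => Iff.rfl, fun h Φ => (h Φ).symm, fun h1 h2 Φ => (h1 Φ).trans (h2 Φ)⟩

theorem sat_of_mk_eq {W PL : Type*} [PartialOrder W] (V : PL → W → Prop)
    {u v : W} (h : Quot.mk (eqEta V) u = Quot.mk (eqEta V) v) (Φ : SLCS PL) :
    sat (· ≤ ·) V Φ u ↔ sat (· ≤ ·) V Φ v :=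
  ((eqEta_equiv V).eqvGen_iff.mp (Quot.eq.mp h)) Φ

/-- Prefix an up-step to an η-witnessing path. -/
theorem sat_eta_up {W PL : Type*} [PartialOrder W] (V : PL → W → Prop)
    {φ ψ : SLCS PL} {u v : W} (huv : u ≤ v) (hu : sat (· ≤ ·) V φ u)
    (hv : sat (· ≤ ·) V (.eta φ ψ) v) : sat (· ≤ ·) V (.eta φ ψ) u := by
  obtain ⟨m, ρ, ⟨hm2, hU, hf, hl⟩, hρ0, hψ, hφ⟩ := hv
  obtain ⟨k, rfl⟩ : ∃ k, m = k + 2 := ⟨m - 2, by omega⟩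
  refine ⟨k + 3, fun j => match j with | 0 => u | j + 1 => ρ j, ⟨by omega, ?_, ?_, ?_⟩,
    rfl, hψ, ?_⟩
  · intro j hj
    match j with
    | 0 => left; show u ≤ ρ 0; rw [hρ0]; exact huv
    | j + 1 => exact hU j (by omega)
  · show u ≤ ρ 0; rw [hρ0]; exact huv
  · exact hl
  · intro j hj
    match j with
    | 0 => exact hu
    | j + 1 => exact hφ j (by omega)

/-- Prefix a down-step (preceded by a reflexive up-step) to an η-witnessing path. -/
theorem sat_eta_down {W PL : Type*} [PartialOrder W] (V : PL → W → Prop)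
    {φ ψ : SLCS PL} {a b : W} (hab : a ≤ b) (hb : sat (· ≤ ·) V φ b)
    (ha : sat (· ≤ ·) V (.eta φ ψ) a) : sat (· ≤ ·) V (.eta φ ψ) b := by
  obtain ⟨m, ρ, ⟨hm2, hU, hf, hl⟩, hρ0, hψ, hφ⟩ := ha
  obtain ⟨k, rfl⟩ : ∃ k, m = k + 2 := ⟨m - 2, by omega⟩
  refine ⟨k + 4, fun j => match j with | 0 => b | 1 => b | j + 2 => ρ j, ⟨by omega, ?_, le_refl b, ?_⟩,
    rfl, hψ, ?_⟩
  · intro j hj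
    match j with
    | 0 => left; exact le_refl b
    | 1 => right; show ρ 0 ≤ b; rw [hρ0]; exact hab
    | j + 2 => exact hU j (by omega)
  · exact hl
  · intro j hj
    match j with
    | 0 => exact hb
    | 1 => exact hb
    | j + 2 => exact hφ j (by omega)

/-- Base case: two-step path v ≥ u realised concretely via v, v, u. -/
theorem sat_eta_base {W PL : Type*} [PartialOrder W] (V : PL → W → Prop)
    {φ ψ : SLCS PL} {u v : W} (huv : u ≤ v) (hv : sat (· ≤ ·) V φ v)
    (hu : sat (· ≤ ·) V ψ u) : sat (· ≤ ·) V (.eta φ ψ) v := by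
  refine ⟨2, fun j => match j with | 0 => v | 1 => v | _ + 2 => u, ⟨le_refl 2, ?_, le_refl v, huv⟩,
    rfl, hu, ?_⟩
  · intro j hj
    match j with
    | 0 => left; exact le_refl v
    | 1 => right; exact huv
  · intro j hj
    match j with
    | 0 => exact hv
    | 1 => exact hv

/-- Theorem (correctness of minimisation): for each `w ∈ W` and SLCS_η formula `Φ`,
`F,w ⊨ Φ` iff `F_min,[w] ⊨ Φ`, where `η` is interpreted via ±-paths over `R_min`
in the quotient Kripke model. -/
theorem sat_iff_sat_min {W PL : Type*} [PartialOrder W] [Finite W]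
    (V : PL → W → Prop) (w : W) (Φ : SLCS PL) :
    sat (· ≤ ·) V Φ w ↔ sat (Rmin V) (Vmin V) Φ (Quot.mk (eqEta V) w) := by
  induction Φ generalizing w with
  | ap p =>
    constructor
    · intro h; exact ⟨w, rfl, h⟩
    · rintro ⟨w', heq, h⟩
      exact (sat_of_mk_eq V heq (.ap p)).mpr h
  | neg φ ih => simpa [sat] using (ih w).not
  | conj φ ψ ihφ ihψ =>
    show _ ∧ _ ↔ _ ∧ _
    rw [ihφ, ihψ]
  | eta φ ψ ihφ ihψ =>
    constructor
    · rintro ⟨ℓ, π, ⟨h2, hU, hf, hl⟩, hπ0, hψ, hφ⟩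
      refine ⟨ℓ, fun i => Quot.mk _ (π i), ⟨h2, ?_, ⟨_, _, rfl, rfl, hf⟩, ⟨_, _, rfl, rfl, hl⟩⟩,
        congrArg (Quot.mk _) hπ0, (ihψ _).mp hψ, fun i hi => (ihφ _).mp (hφ i hi)⟩
      intro i hi
      rcases hU i hi with h | h
      · exact Or.inl ⟨_, _, rfl, rfl, h⟩
      · exact Or.inr ⟨_, _, rfl, rfl, h⟩
    · rintro ⟨ℓ, π, ⟨h2, hU, hf, hl⟩, h0, hψ, hφ⟩
      have key : ∀ d i, i + d + 1 = ℓ → 1 ≤ i →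
          ∀ x : W, Quot.mk (eqEta V) x = π i → sat (· ≤ ·) V (.eta φ ψ) x := by
        intro d
        induction d with
        | zero =>
          intro i hiℓ hi1 x hx
          obtain ⟨u, v, hu, hv, huv⟩ := hl
          have hvi : π i = Quot.mk (eqEta V) v := by
            have : ℓ - 1 = i := by omega
            rwa [this] at hv
          have hφv : sat (· ≤ ·) V φ v :=
            (ihφ v).mpr (by rw [← hvi]; exact hφ i (by omega))
          have hψu : sat (· ≤ ·) V ψ u := (ihψ u).mpr (by rw [← hu]; exact hψ)
          exact (sat_of_mk_eq V (by rw [hx, hvi]) (.eta φ ψ)).mpr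
            (sat_eta_base V huv hφv hψu)
        | succ d ihd =>
          intro i hiℓ hi1 x hx
          rcases hU i (by omega) with hst | hst
          · obtain ⟨u, v, hu, hv, huv⟩ := hst
            have hEv : sat (· ≤ ·) V (.eta φ ψ) v := ihd (i + 1) (by omega) (by omega) v hv.symm
            have hφu : sat (· ≤ ·) V φ u :=
              (ihφ u).mpr (by rw [← hu]; exact hφ i (by omega))
            exact (sat_of_mk_eq V (by rw [hx, hu]) (.eta φ ψ)).mpr
              (sat_eta_up V huv hφu hEv)
          · obtain ⟨a, b, ha, hb, hab⟩ := hst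
            have hEa : sat (· ≤ ·) V (.eta φ ψ) a := ihd (i + 1) (by omega) (by omega) a ha.symm
            have hφb : sat (· ≤ ·) V φ b :=
              (ihφ b).mpr (by rw [← hb]; exact hφ i (by omega))
            exact (sat_of_mk_eq V (by rw [hx, hb]) (.eta φ ψ)).mpr
              (sat_eta_down V hab hφb hEa)
      obtain ⟨u, v, hu, hv, huv⟩ := hf
      have hEv : sat (· ≤ ·) V (.eta φ ψ) v := key (ℓ - 2) 1 (by omega) le_rfl v hv.symm
      have hφu : sat (· ≤ ·) V φ u :=
        (ihφ u).mpr (by rw [← hu]; exact hφ 0 (by omega))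
      exact (sat_of_mk_eq V (by rw [← h0, hu]) (.eta φ ψ)).mpr (sat_eta_up V huv hφu hEv)
end

section
/- Given a polyhedral model P = (|K|,V) with cell poset model F(P) = (W,≼,V'), and any down-path π : [0;ℓ] → W in the cell poset, there exists a topological path π' : [0,1] → |K| such that the cell of π'(0) is π(0), the cell of π'(1) is π(ℓ), and for every r ∈ (0,1) there exists i < ℓ such that the cell of π'(r) is π(i). -/
/-- The cell (relative interior) of a simplex with vertex set `s`. -/
def cell {m : ℕ} (s : Finset (EuclideanSpace ℝ (Fin m))) :
    Set (EuclideanSpace ℝ (Fin m)) :=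
  intrinsicInterior ℝ (convexHull ℝ (s : Set (EuclideanSpace ℝ (Fin m))))

/-- The cell-poset order: `cellLE s t` iff the cell of `s` is contained in the
topological closure of the cell of `t`. -/
def cellLE {m : ℕ} (s t : Finset (EuclideanSpace ℝ (Fin m))) : Prop :=
  cell s ⊆ closure (cell t)

open AffineMap Set

section Torsor
variable {V P : Type*} [NormedAddCommGroup V] [NormedSpace ℝ V]
  [MetricSpace P] [NormedAddTorsor V P]

lemma lineMap_mem_interior_aux {C : Set P}
    (hC : ∀ p ∈ C, ∀ q ∈ C, ∀ t : ℝ, 0 ≤ t → t ≤ 1 → AffineMap.lineMap p q t ∈ C)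
    {x y : P} (hx : x ∈ C) (hy : y ∈ interior C) {t : ℝ} (ht : 0 < t) (ht1 : t ≤ 1) :
    AffineMap.lineMap x y t ∈ interior C := by
  rw [mem_interior_iff_mem_nhds, Metric.mem_nhds_iff] at hy ⊢
  obtain ⟨ε, hε, hball⟩ := hy
  refine ⟨t * ε, by positivity, ?_⟩
  intro z hz
  have hzd : dist z (AffineMap.lineMap x y t) < t * ε := by
    simpa [Metric.mem_ball] using hz
  set w : P := AffineMap.lineMap x z t⁻¹ with hw
  have hwz : AffineMap.lineMap x w t = z := by
    simp [hw, AffineMap.lineMap_apply, vadd_vsub, smul_smul,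
      mul_inv_cancel₀ ht.ne', one_smul]
  have hdw : dist w y = t⁻¹ * dist z (AffineMap.lineMap x y t) := by
    rw [dist_eq_norm_vsub V, dist_eq_norm_vsub V]
    have h1 : w -ᵥ y = t⁻¹ • ((z -ᵥ x) - t • (y -ᵥ x)) := by
      simp [hw, AffineMap.lineMap_apply, vadd_vsub_assoc, smul_sub, smul_smul,
        inv_mul_cancel₀ ht.ne', one_smul]
      rw [sub_eq_add_neg, neg_vsub_eq_vsub_rev]
    have h2 : z -ᵥ AffineMap.lineMap x y t = (z -ᵥ x) - t • (y -ᵥ x) := by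
      simp [AffineMap.lineMap_apply, vsub_vadd_eq_vsub_sub]
    rw [h1, h2, norm_smul, Real.norm_eq_abs, abs_of_pos (by positivity)]
  have hwy : w ∈ Metric.ball y ε := by
    rw [Metric.mem_ball, hdw]
    calc t⁻¹ * dist z (AffineMap.lineMap x y t) < t⁻¹ * (t * ε) := by
          exact (mul_lt_mul_iff_right₀ (by positivity)).2 hzd
      _ = ε := by field_simp
  have hwC : w ∈ C := hball hwy
  rw [← hwz]
  exact hC x hx w hwC t ht.le ht1

end Torsor

section Intrinsic
variable {E : Type*} [NormedAddCommGroup E] [NormedSpace ℝ E]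

lemma openSegment_subset_intrinsicInterior {A : Set E}
    (hA : Convex ℝ A) {x y : E} (hx : x ∈ A) (hy : y ∈ intrinsicInterior ℝ A) :
    openSegment ℝ x y ⊆ intrinsicInterior ℝ A := by
  obtain ⟨y', hy', hy'c⟩ := mem_intrinsicInterior.1 hy
  haveI : Nonempty (affineSpan ℝ A) := ⟨⟨x, subset_affineSpan ℝ A hx⟩⟩
  set C : Set (affineSpan ℝ A) := (↑) ⁻¹' A with hCdef
  have hC : ∀ p ∈ C, ∀ q ∈ C, ∀ t : ℝ, 0 ≤ t → t ≤ 1 → AffineMap.lineMap p q t ∈ C := by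
    intro p hp q hq t ht0 ht1
    have : (↑(AffineMap.lineMap p q t : affineSpan ℝ A) : E) =
        AffineMap.lineMap (p : E) (q : E) t := by
      exact (affineSpan ℝ A).subtype.apply_lineMap p q t
    simp only [hCdef, Set.mem_preimage, this, AffineMap.lineMap_apply_module]
    exact hA hp hq (by linarith) ht0 (by ring)
  intro z hz
  rw [openSegment_eq_image_lineMap] at hz
  obtain ⟨t, ht, rfl⟩ := hz
  set x' : affineSpan ℝ A := ⟨x, subset_affineSpan ℝ A hx⟩ with hx'
  have hmem := lineMap_mem_interior_aux hC (show x' ∈ C from hx) hy' ht.1 ht.2.le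
  refine mem_intrinsicInterior.2 ⟨AffineMap.lineMap x' y' t, hmem, ?_⟩
  rw [show ((AffineMap.lineMap x' y' t : affineSpan ℝ A) : E) =
      AffineMap.lineMap (x' : E) (y' : E) t
    from (affineSpan ℝ A).subtype.apply_lineMap x' y' t]
  rw [hy'c]

end Intrinsic

section Cells

variable {m : ℕ} {s t : Finset (EuclideanSpace ℝ (Fin m))}

lemma cell_subset : cell s ⊆ convexHull ℝ (s : Set (EuclideanSpace ℝ (Fin m))) :=
  intrinsicInterior_subset

lemma closure_cell_subset :
    closure (cell s) ⊆ convexHull ℝ (s : Set (EuclideanSpace ℝ (Fin m))) :=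
  closure_minimal cell_subset (s.finite_toSet.isClosed_convexHull ℝ)

lemma cell_nonempty (hs : s.Nonempty) : (cell s).Nonempty := by
  refine Set.Nonempty.intrinsicInterior (convex_convexHull ℝ _) ?_
  exact ⟨hs.choose, subset_convexHull ℝ _ (by exact_mod_cast hs.choose_spec)⟩

/-- A chosen point in the cell of `s`. -/
noncomputable def cpt (s : Finset (EuclideanSpace ℝ (Fin m))) : EuclideanSpace ℝ (Fin m) :=
  Classical.epsilon (· ∈ cell s)

lemma cpt_mem (hs : s.Nonempty) : cpt s ∈ cell s :=
  Classical.epsilon_spec (cell_nonempty hs)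

end Cells

section Seg
variable {E : Type*} [NormedAddCommGroup E] [NormedSpace ℝ E]

/-- The straight-line path from `a` to `b`. -/
noncomputable def segPath (a b : E) : Path a b where
  toFun t := AffineMap.lineMap a b (t : ℝ)
  continuous_toFun := AffineMap.lineMap_continuous.comp continuous_subtype_val
  source' := by simp
  target' := by simp

lemma segPath_mem_openSegment (a b : E) {r : unitInterval} (h0 : (0 : ℝ) < r)
    (h1 : (r : ℝ) < 1) : segPath a b r ∈ openSegment ℝ a b := by
  rw [openSegment_eq_image_lineMap]
  exact ⟨(r : ℝ), ⟨h0, h1⟩, rfl⟩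

end Seg

section SegCells

variable {m : ℕ} {s t : Finset (EuclideanSpace ℝ (Fin m))}

/-- Every point of the open segment from the chosen point of `s` to the chosen point of
`t` lies in `cell t` whenever `cellLE s t`. -/
lemma openSegment_cpt_subset (hs : s.Nonempty) (ht : t.Nonempty) (h : cellLE s t) :
    openSegment ℝ (cpt s) (cpt t) ⊆ cell t := by
  have hx : cpt s ∈ convexHull ℝ (t : Set (EuclideanSpace ℝ (Fin m))) :=
    closure_cell_subset (h (cpt_mem hs))
  exact openSegment_subset_intrinsicInterior (convex_convexHull ℝ _) hx (cpt_mem ht)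

lemma segPath_mem_union (hs : s.Nonempty) (ht : t.Nonempty)
    (h : cellLE s t ∨ cellLE t s) (r : unitInterval) :
    segPath (cpt s) (cpt t) r ∈ cell s ∪ cell t := by
  rcases eq_or_lt_of_le r.2.1 with h0 | h0
  · have : r = 0 := Subtype.ext h0.symm
    rw [this, (segPath (cpt s) (cpt t)).source]
    exact Or.inl (cpt_mem hs)
  rcases eq_or_lt_of_le r.2.2 with h1 | h1
  · have : r = 1 := Subtype.ext h1
    rw [this, (segPath (cpt s) (cpt t)).target]
    exact Or.inr (cpt_mem ht)
  have hos := segPath_mem_openSegment (cpt s) (cpt t) h0 h1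
  rcases h with h | h
  · exact Or.inr (openSegment_cpt_subset hs ht h hos)
  · refine Or.inl (openSegment_cpt_subset ht hs h ?_)
    rwa [openSegment_symm]

lemma segPath_mem_left (hs : s.Nonempty) (ht : t.Nonempty) (h : cellLE t s)
    {r : unitInterval} (h1 : (r : ℝ) < 1) :
    segPath (cpt s) (cpt t) r ∈ cell s := by
  rcases eq_or_lt_of_le r.2.1 with h0 | h0
  · have : r = 0 := Subtype.ext h0.symm
    rw [this, (segPath (cpt s) (cpt t)).source]
    exact cpt_mem hs
  have hos := segPath_mem_openSegment (cpt s) (cpt t) h0 h1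
  refine openSegment_cpt_subset ht hs h ?_
  rwa [openSegment_symm]

end SegCells

lemma face_nonempty {m : ℕ} (K : Geometry.SimplicialComplex ℝ (EuclideanSpace ℝ (Fin m)))
    {s : Finset (EuclideanSpace ℝ (Fin m))} (hs : s ∈ K.faces) : s.Nonempty := by
  rcases s.eq_empty_or_nonempty with rfl | h
  · exact absurd hs K.empty_notMem
  · exact h

lemma exists_cell_path {m : ℕ} (K : Geometry.SimplicialComplex ℝ (EuclideanSpace ℝ (Fin m)))
    (π : ℕ → Finset (EuclideanSpace ℝ (Fin m))) :
    ∀ n : ℕ, (∀ i ≤ n, π i ∈ K.faces) →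
      (∀ i < n, cellLE (π i) (π (i + 1)) ∨ cellLE (π (i + 1)) (π i)) →
      ∃ γ : Path (cpt (π 0)) (cpt (π n)), ∀ r, ∃ i ≤ n, γ r ∈ cell (π i) := by
  intro n
  induction n with
  | zero =>
    intro hf _
    exact ⟨Path.refl _, fun r => ⟨0, le_refl 0, cpt_mem (face_nonempty K (hf 0 le_rfl))⟩⟩
  | succ n ih =>
    intro hf hp
    obtain ⟨γ, hγ⟩ := ih (fun i hi => hf i (hi.trans (Nat.le_succ n)))
      (fun i hi => hp i (hi.trans (Nat.lt_succ_self n)))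
    have hsn : (π n).Nonempty := face_nonempty K (hf n (Nat.le_succ n))
    have hsn1 : (π (n + 1)).Nonempty := face_nonempty K (hf (n + 1) le_rfl)
    refine ⟨γ.trans (segPath _ _), fun r => ?_⟩
    rw [Path.trans_apply]
    split
    · obtain ⟨i, hi, hmem⟩ := hγ _
      exact ⟨i, hi.trans (Nat.le_succ n), hmem⟩
    · rcases segPath_mem_union hsn hsn1 (hp n (Nat.lt_succ_self n)) _ with h | h
      · exact ⟨n, Nat.le_succ n, h⟩
      · exact ⟨n + 1, le_rfl, h⟩

/-- Lemma: for every down-path `π` in the cell poset of a simplicial complex `K`, there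
is a topological path `π'` in the polyhedron `|K|` whose starting point lies in the cell
`π 0`, whose ending point lies in the cell `π ℓ`, and whose intermediate points all lie
in cells `π i` with `i < ℓ`. -/
theorem down_path_to_topological_path {m : ℕ}
    (K : Geometry.SimplicialComplex ℝ (EuclideanSpace ℝ (Fin m)))
    (ℓ : ℕ) (π : ℕ → Finset (EuclideanSpace ℝ (Fin m)))
    (hfaces : ∀ i ≤ ℓ, π i ∈ K.faces)
    (hℓ : 1 ≤ ℓ)
    (hpath : ∀ i < ℓ, cellLE (π i) (π (i + 1)) ∨ cellLE (π (i + 1)) (π i))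
    (hlast : cellLE (π ℓ) (π (ℓ - 1))) :
    ∃ π' : unitInterval → EuclideanSpace ℝ (Fin m),
      Continuous π' ∧ (∀ r, π' r ∈ K.space) ∧
      π' 0 ∈ cell (π 0) ∧ π' 1 ∈ cell (π ℓ) ∧
      ∀ r : unitInterval, 0 < r → r < 1 → ∃ i < ℓ, π' r ∈ cell (π i) := by
  have hsub : ℓ - 1 < ℓ := by omega
  obtain ⟨γ, hγ⟩ := exists_cell_path K π (ℓ - 1)
    (fun i hi => hfaces i (by omega)) (fun i hi => hpath i (by omega))
  have hn1 : (π (ℓ - 1)).Nonempty := face_nonempty K (hfaces _ (by omega))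
  have hnℓ : (π ℓ).Nonempty := face_nonempty K (hfaces ℓ le_rfl)
  set seg := segPath (cpt (π (ℓ - 1))) (cpt (π ℓ)) with hsegdef
  set γ' := γ.trans seg with hγ'def
  have hall : ∀ r, ∃ i ≤ ℓ, γ' r ∈ cell (π i) := by
    intro r
    rw [hγ'def, Path.trans_apply]
    split
    · obtain ⟨i, hi, hmem⟩ := hγ _
      exact ⟨i, by omega, hmem⟩
    · rename_i h
      set u : unitInterval := ⟨2 * (r : ℝ) - 1, by constructor <;> [linarith [not_le.1 h]; linarith [r.2.2]]⟩
      rcases eq_or_lt_of_le u.2.2 with h1 | h1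
      · have : u = 1 := Subtype.ext h1
        rw [this, seg.target]
        exact ⟨ℓ, le_rfl, cpt_mem hnℓ⟩
      · exact ⟨ℓ - 1, by omega, segPath_mem_left hn1 hnℓ hlast h1⟩
  refine ⟨γ', γ'.continuous, ?_, ?_, ?_, ?_⟩
  · intro r
    obtain ⟨i, hi, hmem⟩ := hall r
    exact Geometry.SimplicialComplex.convexHull_subset_space (hfaces i hi) (cell_subset hmem)
  · rw [hγ'def]
    rw [Path.source]  -- γ' 0 = cpt (π 0)
    exact cpt_mem (face_nonempty K (hfaces 0 (by omega)))
  · rw [hγ'def, Path.target]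
    exact cpt_mem hnℓ
  · intro r hr0 hr1
    rw [hγ'def, Path.trans_apply]
    split
    · obtain ⟨i, hi, hmem⟩ := hγ _
      exact ⟨i, by omega, hmem⟩
    · rename_i h
      have hu1 : (2 * (r : ℝ) - 1 : ℝ) < 1 := by
        have : (r : ℝ) < 1 := hr1
        linarith
      exact ⟨ℓ - 1, hsub, segPath_mem_left hn1 hnℓ hlast hu1⟩
end
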